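/- arXiv:2304.10802 — 14 statements merged into one kernel-verified Lean document; each statement's English description precedes it below -/
import Mathlib

section
/- Let α>0, β>0, σ_Z≥0, ρ, μ_Z, η ∈ ℝ with ρ>μ_Z, p<1 with ρ(1−p)>αp, and let κ be the positive root of ακ²+(ρ−η−α)κ+(μ_Z−ρ)=0. Define, for (r,h)∈[0,∞)², u(r,h) = (1−p)³/(p(ρ(1−p)−αp))·β^{−p/(1−p)}·e^{pr/(1−p)} + (1−p)²/(ρ(1−p)−αp)·β^{−p/(1−p)}·e^{−r} + (βe^{−r} − (β/κ)e^{−κr})·h when p≠0, and u(r,h) = r/ρ − (ln β + 2)/ρ + α/ρ² + e^{−r}/ρ + (βe^{−r} − (β/κ)e^{−κr})·h when p=0. Then u is twice continuously differentiable and satisfies, on [0,∞)², the linear PDE −ρu + (α−ρ)u_r + αu_{rr} + μ_Z h u_h + (σ_Z²/2)h² u_{hh} + η h u_{rh} − (μ_Z−η)βhe^{−r} + Φ(βe^{−r}) = 0, together with the Neumann boundary condition u_r(0,h)=0 for all h>0. -/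
open Real

noncomputable def G (a₁ b₁ a₂ b₂ a₃ b₃ a₄ b₄ L C : ℝ) (r h : ℝ) : ℝ :=
  a₁ * Real.exp (b₁ * r) + a₂ * Real.exp (b₂ * r) +
  (a₃ * Real.exp (b₃ * r) + a₄ * Real.exp (b₄ * r)) * h + L * r + C

lemma hasDerivAt_aexp (a b x : ℝ) :
    HasDerivAt (fun y => a * Real.exp (b * y)) (a * b * Real.exp (b * x)) x := by
  have h1 : HasDerivAt (fun y : ℝ => b * y) b x := by
    simpa using (hasDerivAt_id x).const_mul b
  have := h1.exp.const_mul a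
  exact this.congr_deriv (by ring)

lemma G_hasDerivAt_r (a₁ b₁ a₂ b₂ a₃ b₃ a₄ b₄ L C r h : ℝ) :
    HasDerivAt (fun s => G a₁ b₁ a₂ b₂ a₃ b₃ a₄ b₄ L C s h)
      (G (a₁*b₁) b₁ (a₂*b₂) b₂ (a₃*b₃) b₃ (a₄*b₄) b₄ 0 L r h) r := by
  have := ((((hasDerivAt_aexp a₁ b₁ r).add (hasDerivAt_aexp a₂ b₂ r)).add
      (((hasDerivAt_aexp a₃ b₃ r).add (hasDerivAt_aexp a₄ b₄ r)).mul_const h)).add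
      ((hasDerivAt_id r).const_mul L)).add_const C
  refine this.congr_deriv ?_
  simp [G]

lemma G_deriv_r (a₁ b₁ a₂ b₂ a₃ b₃ a₄ b₄ L C r h : ℝ) :
    deriv (fun s => G a₁ b₁ a₂ b₂ a₃ b₃ a₄ b₄ L C s h) r
      = G (a₁*b₁) b₁ (a₂*b₂) b₂ (a₃*b₃) b₃ (a₄*b₄) b₄ 0 L r h :=
  (G_hasDerivAt_r ..).deriv

lemma G_hasDerivAt_h (a₁ b₁ a₂ b₂ a₃ b₃ a₄ b₄ L C r h : ℝ) :
    HasDerivAt (fun t => G a₁ b₁ a₂ b₂ a₃ b₃ a₄ b₄ L C r t)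
      (a₃ * Real.exp (b₃ * r) + a₄ * Real.exp (b₄ * r)) h := by
  have := ((((hasDerivAt_id h).const_mul
      (a₃ * Real.exp (b₃ * r) + a₄ * Real.exp (b₄ * r))).const_add
      (a₁ * Real.exp (b₁ * r) + a₂ * Real.exp (b₂ * r))).add_const (L * r)).add_const C
  refine this.congr_deriv ?_
  simp

lemma G_deriv_h (a₁ b₁ a₂ b₂ a₃ b₃ a₄ b₄ L C r : ℝ) :
    deriv (fun t => G a₁ b₁ a₂ b₂ a₃ b₃ a₄ b₄ L C r t)
      = fun _ => a₃ * Real.exp (b₃ * r) + a₄ * Real.exp (b₄ * r) :=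
  funext fun h' => (G_hasDerivAt_h a₁ b₁ a₂ b₂ a₃ b₃ a₄ b₄ L C r h').deriv

lemma G_contDiff (a₁ b₁ a₂ b₂ a₃ b₃ a₄ b₄ L C : ℝ) :
    ContDiff ℝ 2 (fun q : ℝ × ℝ => G a₁ b₁ a₂ b₂ a₃ b₃ a₄ b₄ L C q.1 q.2) := by
  unfold G
  fun_prop

lemma main_derivs (a₁ b₁ a₂ b₂ a₃ b₃ a₄ b₄ L C : ℝ) (u : ℝ → ℝ → ℝ)
    (hE : ∀ r h, u r h = G a₁ b₁ a₂ b₂ a₃ b₃ a₄ b₄ L C r h) (r h : ℝ) :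
    deriv (fun s => u s h) r = G (a₁*b₁) b₁ (a₂*b₂) b₂ (a₃*b₃) b₃ (a₄*b₄) b₄ 0 L r h ∧
    deriv (deriv (fun s => u s h)) r
      = G (a₁*b₁*b₁) b₁ (a₂*b₂*b₂) b₂ (a₃*b₃*b₃) b₃ (a₄*b₄*b₄) b₄ 0 0 r h ∧
    deriv (fun t => u r t) h = a₃ * Real.exp (b₃*r) + a₄ * Real.exp (b₄*r) ∧
    deriv (deriv (fun t => u r t)) h = 0 ∧
    deriv (fun t => deriv (fun s => u s t) r) h
      = a₃*b₃*Real.exp (b₃*r) + a₄*b₄*Real.exp (b₄*r) := by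
  have e1 : (fun s => u s h) = fun s => G a₁ b₁ a₂ b₂ a₃ b₃ a₄ b₄ L C s h :=
    funext fun s => hE s h
  have e2 : (fun t => u r t) = fun t => G a₁ b₁ a₂ b₂ a₃ b₃ a₄ b₄ L C r t :=
    funext fun t => hE r t
  have e3 : deriv (fun s => G a₁ b₁ a₂ b₂ a₃ b₃ a₄ b₄ L C s h)
      = fun s => G (a₁*b₁) b₁ (a₂*b₂) b₂ (a₃*b₃) b₃ (a₄*b₄) b₄ 0 L s h :=
    funext fun s => G_deriv_r a₁ b₁ a₂ b₂ a₃ b₃ a₄ b₄ L C s h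
  have e4 : (fun t => deriv (fun s => u s t) r)
      = fun t => G (a₁*b₁) b₁ (a₂*b₂) b₂ (a₃*b₃) b₃ (a₄*b₄) b₄ 0 L r t := by
    funext t
    rw [show (fun s => u s t) = fun s => G a₁ b₁ a₂ b₂ a₃ b₃ a₄ b₄ L C s t from
      funext fun s => hE s t, G_deriv_r]
  refine ⟨?_, ?_, ?_, ?_, ?_⟩
  · rw [e1, G_deriv_r]
  · rw [e1, e3, G_deriv_r]
  · rw [e2]; exact (G_hasDerivAt_h a₁ b₁ a₂ b₂ a₃ b₃ a₄ b₄ L C r h).deriv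
  · rw [e2, G_deriv_h]; exact deriv_const h _
  · rw [e4]
    exact (G_hasDerivAt_h (a₁*b₁) b₁ (a₂*b₂) b₂ (a₃*b₃) b₃ (a₄*b₄) b₄ 0 L r h).deriv

/-- The explicit function `u` solves the transformed linear dual PDE with Neumann
boundary condition `u_r(0,h) = 0`. -/
theorem stmt_2 (α β σZ ρ μZ η p κ : ℝ) (hα : 0 < α) (hβ : 0 < β) (hσZ : 0 ≤ σZ)
    (hρ : μZ < ρ) (hp : p < 1) (hρp : α * p < ρ * (1 - p))
    (hκpos : 0 < κ)
    (hκroot : α * κ ^ 2 + (ρ - η - α) * κ + (μZ - ρ) = 0)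
    (u : ℝ → ℝ → ℝ)
    (hu : ∀ r h : ℝ, u r h =
      if p = 0 then
        r / ρ - (Real.log β + 2) / ρ + α / ρ ^ 2 + Real.exp (-r) / ρ +
          (β * Real.exp (-r) - β / κ * Real.exp (-κ * r)) * h
      else
        (1 - p) ^ 3 / (p * (ρ * (1 - p) - α * p)) * β ^ (-p / (1 - p)) *
            Real.exp (p / (1 - p) * r)
          + (1 - p) ^ 2 / (ρ * (1 - p) - α * p) * β ^ (-p / (1 - p)) * Real.exp (-r)
          + (β * Real.exp (-r) - β / κ * Real.exp (-κ * r)) * h)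
    (Φ : ℝ → ℝ)
    (hΦ : ∀ y : ℝ, 0 < y →
      Φ y = if p = 0 then -Real.log y - 1 else (1 - p) / p * y ^ (-p / (1 - p))) :
    ContDiff ℝ 2 (fun q : ℝ × ℝ => u q.1 q.2) ∧
    (∀ r h : ℝ, 0 ≤ r → 0 ≤ h →
      -ρ * u r h + (α - ρ) * deriv (fun s => u s h) r
        + α * deriv (deriv (fun s => u s h)) r
        + μZ * h * deriv (fun t => u r t) h
        + σZ ^ 2 / 2 * h ^ 2 * deriv (deriv (fun t => u r t)) h
        + η * h * deriv (fun t => deriv (fun s => u s t) r) h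
        - (μZ - η) * β * h * Real.exp (-r) + Φ (β * Real.exp (-r)) = 0) ∧
    (∀ h : ℝ, 0 < h → deriv (fun s => u s h) 0 = 0) := by
  have hκ0 : κ ≠ 0 := hκpos.ne'
  by_cases hp0 : p = 0
  · -- case p = 0
    subst hp0
    have hρ0 : (0:ℝ) < ρ := by simpa using hρp
    have hE : ∀ r h, u r h = G 0 0 (1/ρ) (-1) β (-1) (-(β/κ)) (-κ) (1/ρ)
        (α/ρ^2 - (Real.log β + 2)/ρ) r h := by
      intro r h
      rw [hu, if_pos rfl]
      simp only [G, neg_one_mul]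
      ring
    refine ⟨?_, ?_, ?_⟩
    · rw [show (fun q : ℝ × ℝ => u q.1 q.2)
          = fun q : ℝ × ℝ => G 0 0 (1/ρ) (-1) β (-1) (-(β/κ)) (-κ) (1/ρ)
            (α/ρ^2 - (Real.log β + 2)/ρ) q.1 q.2 from funext fun q => hE q.1 q.2]
      exact G_contDiff _ _ _ _ _ _ _ _ _ _
    · intro r h hr hh
      obtain ⟨d1, d2, d3, d4, d5⟩ := main_derivs _ _ _ _ _ _ _ _ _ _ u hE r h
      rw [hu, if_pos rfl, d1, d2, d3, d4, d5,
        hΦ _ (by positivity), if_pos rfl,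
        Real.log_mul hβ.ne' (Real.exp_ne_zero _), Real.log_exp]
      simp only [G, neg_one_mul, zero_mul, mul_zero, Real.exp_zero, mul_one, one_mul,
        zero_add, add_zero, neg_neg]
      have key0 : -ρ*(r/ρ - (Real.log β + 2)/ρ + α/ρ^2 + Real.exp (-r)/ρ)
          + (α-ρ)*(1/ρ - Real.exp (-r)/ρ) + α*(Real.exp (-r)/ρ)
          + (-(Real.log β) + r - 1) = 0 := by
        field_simp
        ring
      linear_combination key0 - β/κ * h * Real.exp (-κ * r) * hκroot
    · intro h hh
      obtain ⟨d1, _, _, _, _⟩ := main_derivs _ _ _ _ _ _ _ _ _ _ u hE 0 h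
      rw [d1]
      simp only [G, neg_one_mul, zero_mul, mul_zero, Real.exp_zero, mul_one, one_mul,
        zero_add, add_zero, neg_zero, neg_neg]
      field_simp
      ring
  · -- case p ≠ 0
    have hp1 : (1:ℝ) - p ≠ 0 := by intro hc; nlinarith
    have hD : ρ * (1 - p) - α * p ≠ 0 := by intro hc; nlinarith
    set K := β ^ (-p / (1 - p)) with hK
    have hE : ∀ r h, u r h = G ((1-p)^3/(p*(ρ*(1-p)-α*p))*K) (p/(1-p))
        ((1-p)^2/(ρ*(1-p)-α*p)*K) (-1) β (-1) (-(β/κ)) (-κ) 0 0 r h := by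
      intro r h
      rw [hu, if_neg hp0]
      simp only [G, neg_one_mul]
      ring
    refine ⟨?_, ?_, ?_⟩
    · rw [show (fun q : ℝ × ℝ => u q.1 q.2)
          = fun q : ℝ × ℝ => G ((1-p)^3/(p*(ρ*(1-p)-α*p))*K) (p/(1-p))
            ((1-p)^2/(ρ*(1-p)-α*p)*K) (-1) β (-1) (-(β/κ)) (-κ) 0 0 q.1 q.2
          from funext fun q => hE q.1 q.2]
      exact G_contDiff _ _ _ _ _ _ _ _ _ _
    · intro r h hr hh
      obtain ⟨d1, d2, d3, d4, d5⟩ := main_derivs _ _ _ _ _ _ _ _ _ _ u hE r h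
      rw [hu, if_neg hp0, d1, d2, d3, d4, d5,
        hΦ _ (by positivity), if_neg hp0,
        Real.mul_rpow hβ.le (Real.exp_pos _).le,
        Real.rpow_def_of_pos (Real.exp_pos _), Real.log_exp,
        show -r * (-p / (1 - p)) = p / (1 - p) * r by ring]
      simp only [G, neg_one_mul, zero_mul, mul_zero, Real.exp_zero, mul_one, one_mul,
        zero_add, add_zero, neg_neg]
      have key1 : -ρ*((1-p)^3/(p*(ρ*(1-p)-α*p))*K)
          + (α-ρ)*((1-p)^3/(p*(ρ*(1-p)-α*p))*K*(p/(1-p)))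
          + α*((1-p)^3/(p*(ρ*(1-p)-α*p))*K*(p/(1-p))*(p/(1-p)))
          + (1-p)/p*K = 0 := by
        field_simp
        rw [div_add_one (by rwa [mul_comm p α])]
        ring
      linear_combination Real.exp (p/(1-p)*r) * key1
        - β/κ * h * Real.exp (-κ * r) * hκroot
    · intro h hh
      obtain ⟨d1, _, _, _, _⟩ := main_derivs _ _ _ _ _ _ _ _ _ _ u hE 0 h
      rw [d1]
      simp only [G, neg_one_mul, zero_mul, mul_zero, Real.exp_zero, mul_one, one_mul,
        zero_add, add_zero, neg_zero, neg_neg]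
      field_simp
      ring
end

section
/- Fix α>0, β>0, σ_Z≥0, ρ, μ_Z, η ∈ ℝ with ρ>μ_Z and μ_Z≥η, p<1 with ρ(1−p)>αp, and let κ be the positive root of ακ²+(ρ−η−α)κ+(μ_Z−ρ)=0. Then the dual value function ĥv is a classical solution on (0,β]×[0,∞) of the linear dual HJB equation −ρ·ĥv(y,z) + ρy·ĥv_y(y,z) + αy²·ĥv_{yy}(y,z) + μ_Z z·ĥv_z(y,z) + (σ_Z²/2)z²·ĥv_{zz}(y,z) − ηzy·ĥv_{yz}(y,z) − (μ_Z−η)zy + Φ(y) = 0, with the Neumann boundary condition ĥv_y(β,z)=0 for all z≥0. -/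
open Real

theorem helper_sep (α β σZ ρ μZ η : ℝ) (hβ : 0 < β)
    (A A' A'' d d' d'' Φ : ℝ → ℝ) (hv : ℝ → ℝ → ℝ)
    (hhv : ∀ y z : ℝ, 0 < y → hv y z = A y + z * d y)
    (hA : ∀ y : ℝ, 0 < y → HasDerivAt A (A' y) y)
    (hA' : ∀ y : ℝ, 0 < y → HasDerivAt A' (A'' y) y)
    (hAc : ∀ y : ℝ, 0 < y → ContDiffAt ℝ 2 A y)
    (hd : ∀ y : ℝ, 0 < y → HasDerivAt d (d' y) y)
    (hd' : ∀ y : ℝ, 0 < y → HasDerivAt d' (d'' y) y)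
    (hdc : ∀ y : ℝ, 0 < y → ContDiffAt ℝ 2 d y)
    (hode1 : ∀ y : ℝ, y ∈ Set.Ioc 0 β →
      -ρ * A y + ρ * y * A' y + α * y ^ 2 * A'' y + Φ y = 0)
    (hode2 : ∀ y : ℝ, y ∈ Set.Ioc 0 β →
      (μZ - ρ) * d y + (ρ - η) * y * d' y + α * y ^ 2 * d'' y - (μZ - η) * y = 0)
    (hNA : A' β = 0) (hNd : d' β = 0) :
    ContDiffOn ℝ 2 (fun q : ℝ × ℝ => hv q.1 q.2) (Set.Ioc 0 β ×ˢ Set.Ici 0) ∧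
    (∀ y z : ℝ, y ∈ Set.Ioc 0 β → 0 ≤ z →
      -ρ * hv y z + ρ * y * deriv (fun s => hv s z) y
        + α * y ^ 2 * deriv (deriv (fun s => hv s z)) y
        + μZ * z * deriv (fun t => hv y t) z
        + σZ ^ 2 / 2 * z ^ 2 * deriv (deriv (fun t => hv y t)) z
        - η * z * y * deriv (fun t => deriv (fun s => hv s t) y) z
        - (μZ - η) * z * y + Φ y = 0) ∧
    (∀ z : ℝ, 0 ≤ z → deriv (fun s => hv s z) β = 0) := by
  have hev : ∀ (z y : ℝ), 0 < y →
      (fun s => hv s z) =ᶠ[nhds y] fun s => A s + z * d s := fun z y hy =>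
    Filter.eventuallyEq_of_mem (Ioi_mem_nhds hy) (fun s hs => hhv s z hs)
  have deriv1 : ∀ (z y : ℝ), 0 < y →
      deriv (fun s => hv s z) y = A' y + z * d' y := by
    intro z y hy
    rw [(hev z y hy).deriv_eq]
    exact ((hA y hy).add ((hd y hy).const_mul z)).deriv
  have deriv2 : ∀ (z y : ℝ), 0 < y →
      deriv (deriv (fun s => hv s z)) y = A'' y + z * d'' y := by
    intro z y hy
    have h2 : deriv (fun s => hv s z) =ᶠ[nhds y] fun s => A' s + z * d' s :=
      Filter.eventuallyEq_of_mem (Ioi_mem_nhds hy) (fun s hs => deriv1 z s hs)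
    rw [h2.deriv_eq]
    exact ((hA' y hy).add ((hd' y hy).const_mul z)).deriv
  have zfun : ∀ y : ℝ, 0 < y → (fun t => hv y t) = fun t => A y + t * d y :=
    fun y hy => funext fun t => hhv y t hy
  have derivz : ∀ (y z : ℝ), 0 < y → deriv (fun t => hv y t) z = d y := by
    intro y z hy
    rw [zfun y hy]
    have : HasDerivAt (fun t : ℝ => A y + t * d y) (d y) z := by
      simpa using ((hasDerivAt_id z).mul_const (d y)).const_add (A y)
    exact this.deriv
  have derivzz : ∀ (y z : ℝ), 0 < y → deriv (deriv (fun t => hv y t)) z = 0 := by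
    intro y z hy
    have : deriv (fun t => hv y t) = fun _ => d y := funext fun t => derivz y t hy
    rw [this]
    exact deriv_const z (d y)
  have derivmixed : ∀ (y z : ℝ), 0 < y →
      deriv (fun t => deriv (fun s => hv s t) y) z = d' y := by
    intro y z hy
    have h3 : (fun t => deriv (fun s => hv s t) y) = fun t => A' y + t * d' y :=
      funext fun t => deriv1 t y hy
    rw [h3]
    have : HasDerivAt (fun t : ℝ => A' y + t * d' y) (d' y) z := by
      simpa using ((hasDerivAt_id z).mul_const (d' y)).const_add (A' y)
    exact this.deriv
  refine ⟨?_, ?_, ?_⟩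
  · have hF : ContDiffOn ℝ 2 (fun q : ℝ × ℝ => A q.1 + q.2 * d q.1)
        (Set.Ioc 0 β ×ˢ Set.Ici 0) := by
      intro q hq
      have hq1 : 0 < q.1 := hq.1.1
      exact (((hAc q.1 hq1).comp q contDiffAt_fst).add
        (contDiffAt_snd.mul ((hdc q.1 hq1).comp q contDiffAt_fst))).contDiffWithinAt
    exact hF.congr fun q hq => hhv q.1 q.2 hq.1.1
  · intro y z hy hz
    rw [hhv y z hy.1, deriv1 z y hy.1, deriv2 z y hy.1, derivz y z hy.1,
      derivzz y z hy.1, derivmixed y z hy.1]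
    linear_combination hode1 y hy + z * hode2 y hy
  · intro z hz
    rw [deriv1 z β hβ, hNA, hNd]
    ring

/-- The explicit dual value function `ĥv` is a classical solution of the linear dual
HJB equation on `(0,β] × [0,∞)` with Neumann boundary condition `ĥv_y(β,z) = 0`. -/
theorem stmt_3 (α β σZ ρ μZ η p κ : ℝ) (hα : 0 < α) (hβ : 0 < β) (hσZ : 0 ≤ σZ)
    (hρ : μZ < ρ) (hμη : η ≤ μZ) (hp : p < 1) (hρp : α * p < ρ * (1 - p))
    (hκpos : 0 < κ)
    (hκroot : α * κ ^ 2 + (ρ - η - α) * κ + (μZ - ρ) = 0)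
    (hv : ℝ → ℝ → ℝ)
    (hhv : ∀ y z : ℝ, 0 < y → hv y z =
      if p = 0 then
        -(1 / ρ) * Real.log y - 2 / ρ + α / ρ ^ 2 + y / (ρ * β)
          + z * (y - β ^ (-(κ - 1)) / κ * y ^ κ)
      else
        (1 - p) ^ 3 / (p * (ρ * (1 - p) - α * p)) * y ^ (-p / (1 - p))
          + (1 - p) ^ 2 / (ρ * (1 - p) - α * p) * β ^ (-(1 / (1 - p))) * y
          + z * (y - β ^ (-(κ - 1)) / κ * y ^ κ))
    (Φ : ℝ → ℝ)
    (hΦ : ∀ y : ℝ, 0 < y →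
      Φ y = if p = 0 then -Real.log y - 1 else (1 - p) / p * y ^ (-p / (1 - p))) :
    ContDiffOn ℝ 2 (fun q : ℝ × ℝ => hv q.1 q.2) (Set.Ioc 0 β ×ˢ Set.Ici 0) ∧
    (∀ y z : ℝ, y ∈ Set.Ioc 0 β → 0 ≤ z →
      -ρ * hv y z + ρ * y * deriv (fun s => hv s z) y
        + α * y ^ 2 * deriv (deriv (fun s => hv s z)) y
        + μZ * z * deriv (fun t => hv y t) z
        + σZ ^ 2 / 2 * z ^ 2 * deriv (deriv (fun t => hv y t)) z
        - η * z * y * deriv (fun t => deriv (fun s => hv s t) y) z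
        - (μZ - η) * z * y + Φ y = 0) ∧
    (∀ z : ℝ, 0 ≤ z → deriv (fun s => hv s z) β = 0) := by
  have hκ0 : κ ≠ 0 := hκpos.ne'
  set C : ℝ := β ^ (-(κ - 1)) / κ with hC
  -- the common z-part d and its derivatives
  set d : ℝ → ℝ := fun y => y - C * y ^ κ with hdd
  set d' : ℝ → ℝ := fun y => 1 - C * (κ * y ^ (κ - 1)) with hdd'
  set d'' : ℝ → ℝ := fun y => -(C * (κ * ((κ - 1) * y ^ (κ - 1 - 1)))) with hdd''
  have hd : ∀ y : ℝ, 0 < y → HasDerivAt d (d' y) y := by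
    intro y hy
    exact (hasDerivAt_id y).sub
      ((Real.hasDerivAt_rpow_const (Or.inl hy.ne')).const_mul C)
  have hd' : ∀ y : ℝ, 0 < y → HasDerivAt d' (d'' y) y := by
    intro y hy
    have h1 : HasDerivAt (fun y : ℝ => C * (κ * y ^ (κ - 1)))
        (C * (κ * ((κ - 1) * y ^ (κ - 1 - 1)))) y :=
      (((Real.hasDerivAt_rpow_const (Or.inl hy.ne')).const_mul κ).const_mul C)
    exact ((hasDerivAt_const y (1:ℝ)).sub h1).congr_deriv (by simp only [hdd'']; ring)
  have hdc : ∀ y : ℝ, 0 < y → ContDiffAt ℝ 2 d y := by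
    intro y hy
    exact contDiffAt_id.sub
      (contDiffAt_const.mul (Real.contDiffAt_rpow_const_of_ne hy.ne'))
  have hode2 : ∀ y : ℝ, y ∈ Set.Ioc 0 β →
      (μZ - ρ) * d y + (ρ - η) * y * d' y + α * y ^ 2 * d'' y - (μZ - η) * y = 0 := by
    intro y hy
    have h0 : 0 < y := hy.1
    have e1 : y ^ (κ - 1) = y ^ (κ - 1 - 1) * y := by
      rw [← Real.rpow_add_one h0.ne' (κ - 1 - 1)]; congr 1; ring
    have e0 : y ^ κ = y ^ (κ - 1) * y := by
      rw [← Real.rpow_add_one h0.ne' (κ - 1)]; congr 1; ring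
    simp only [hdd, hdd', hdd'']
    rw [e0, e1]
    linear_combination (-(C * (y ^ (κ - 1 - 1)) * y ^ 2)) * hκroot
  have hNd : d' β = 0 := by
    have h1 : β ^ (-(κ - 1)) * β ^ (κ - 1) = 1 := by
      rw [← Real.rpow_add hβ]; simp
    simp only [hdd', hC]
    field_simp
    linear_combination (-1 : ℝ) * h1
  by_cases hp0 : p = 0
  · -- case p = 0
    have hρ0 : 0 < ρ := by
      have := hρp; rw [hp0] at this; simpa using this
    set A : ℝ → ℝ := fun y => -(1 / ρ) * Real.log y - 2 / ρ + α / ρ ^ 2 + y / (ρ * β)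
      with hAA
    set A' : ℝ → ℝ := fun y => -(1 / ρ) * y⁻¹ + 1 / (ρ * β) with hAA'
    set A'' : ℝ → ℝ := fun y => -(1 / ρ) * (-(y ^ 2)⁻¹) with hAA''
    have hA : ∀ y : ℝ, 0 < y → HasDerivAt A (A' y) y := by
      intro y hy
      exact ((((Real.hasDerivAt_log hy.ne').const_mul (-(1 / ρ))).sub_const
        (2 / ρ)).add_const (α / ρ ^ 2)).add ((hasDerivAt_id y).div_const (ρ * β))
    have hA' : ∀ y : ℝ, 0 < y → HasDerivAt A' (A'' y) y := by
      intro y hy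
      exact ((hasDerivAt_inv hy.ne').const_mul (-(1 / ρ))).add_const (1 / (ρ * β))
    have hAc : ∀ y : ℝ, 0 < y → ContDiffAt ℝ 2 A y := by
      intro y hy
      exact (((contDiffAt_const.mul (Real.contDiffAt_log.mpr hy.ne')).sub
        contDiffAt_const).add contDiffAt_const).add (contDiffAt_id.div_const _)
    have hhv' : ∀ y z : ℝ, 0 < y → hv y z = A y + z * d y := by
      intro y z hy
      rw [hhv y z hy, if_pos hp0]
    have hode1 : ∀ y : ℝ, y ∈ Set.Ioc 0 β →
        -ρ * A y + ρ * y * A' y + α * y ^ 2 * A'' y + Φ y = 0 := by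
      intro y hy
      have h0 : 0 < y := hy.1
      rw [hΦ y h0, if_pos hp0]
      simp only [hAA, hAA', hAA'']
      field_simp
      ring
    have hNA : A' β = 0 := by
      simp only [hAA']
      field_simp
      ring
    exact helper_sep α β σZ ρ μZ η hβ A A' A'' d d' d'' Φ hv hhv' hA hA' hAc
      hd hd' hdc hode1 hode2 hNA hNd
  · -- case p ≠ 0
    have hp1pos : (0:ℝ) < 1 - p := by linarith
    have hp1 : (1:ℝ) - p ≠ 0 := hp1pos.ne'
    have hDpos : 0 < ρ * (1 - p) - α * p := by linarith
    have hD : ρ * (1 - p) - α * p ≠ 0 := hDpos.ne'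
    set q : ℝ := -p / (1 - p) with hq
    set C1 : ℝ := (1 - p) ^ 3 / (p * (ρ * (1 - p) - α * p)) with hC1
    set C2 : ℝ := (1 - p) ^ 2 / (ρ * (1 - p) - α * p) * β ^ (-(1 / (1 - p))) with hC2
    set A : ℝ → ℝ := fun y => C1 * y ^ q + C2 * y with hAA
    set A' : ℝ → ℝ := fun y => C1 * (q * y ^ (q - 1)) + C2 with hAA'
    set A'' : ℝ → ℝ := fun y => C1 * (q * ((q - 1) * y ^ (q - 1 - 1))) with hAA''
    have hA : ∀ y : ℝ, 0 < y → HasDerivAt A (A' y) y := by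
      intro y hy
      have h1 : HasDerivAt (fun y : ℝ => C1 * y ^ q) (C1 * (q * y ^ (q - 1))) y :=
        (Real.hasDerivAt_rpow_const (Or.inl hy.ne')).const_mul C1
      have h2 : HasDerivAt (fun y : ℝ => C2 * y) C2 y := by
        simpa using (hasDerivAt_id y).const_mul C2
      exact h1.add h2
    have hA' : ∀ y : ℝ, 0 < y → HasDerivAt A' (A'' y) y := by
      intro y hy
      exact (((Real.hasDerivAt_rpow_const (Or.inl hy.ne')).const_mul q).const_mul
        C1).add_const C2
    have hAc : ∀ y : ℝ, 0 < y → ContDiffAt ℝ 2 A y := by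
      intro y hy
      exact (contDiffAt_const.mul (Real.contDiffAt_rpow_const_of_ne hy.ne')).add
        (contDiffAt_const.mul contDiffAt_id)
    have hhv' : ∀ y z : ℝ, 0 < y → hv y z = A y + z * d y := by
      intro y z hy
      rw [hhv y z hy, if_neg hp0]
    have hode1 : ∀ y : ℝ, y ∈ Set.Ioc 0 β →
        -ρ * A y + ρ * y * A' y + α * y ^ 2 * A'' y + Φ y = 0 := by
      intro y hy
      have h0 : 0 < y := hy.1
      have e1 : y ^ (q - 1) = y ^ (q - 1 - 1) * y := by
        rw [← Real.rpow_add_one h0.ne' (q - 1 - 1)]; congr 1; ring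
      have e0 : y ^ q = y ^ (q - 1) * y := by
        rw [← Real.rpow_add_one h0.ne' (q - 1)]; congr 1; ring
      rw [hΦ y h0, if_neg hp0]
      simp only [hAA, hAA', hAA'']
      rw [show y ^ (-p / (1 - p)) = y ^ q from rfl, e0, e1, hC1, hq]
      have hD2 : ρ * (1 - p) - p * α ≠ 0 := by rw [mul_comm p α]; exact hD
      field_simp
      ring
    have hNA : A' β = 0 := by
      have eβ : β ^ (q - 1) = β ^ (-(1 / (1 - p))) := by
        congr 1
        rw [hq]
        field_simp
        ring
      simp only [hAA']
      rw [eβ, hC1, hC2, hq]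
      field_simp
      ring
    exact helper_sep α β σZ ρ μZ η hβ A A' A'' d d' d'' Φ hv hhv' hA hA' hAc
      hd hd' hdc hode1 hode2 hNA hNd
end

section
/- Fix α>0, β>0, ρ, μ_Z, η ∈ ℝ with ρ>μ_Z and μ_Z≥η, p<1 with ρ(1−p)>αp, and let κ∈(0,1] be the positive root of ακ²+(ρ−η−α)κ+(μ_Z−ρ)=0. Then for every z≥0 the map y ↦ ĥv(y,z) on (0,β] satisfies: ĥv_y(y,z) ≤ 0 for all y∈(0,β] with ĥv_y(β,z)=0, ĥv_{yy}(y,z) > 0 for all y∈(0,β] (strict convexity), and ĥv_y(y,z) → −∞ as y→0⁺. -/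
open Real

open Filter in
private lemma zt_d1 {β κ z y : ℝ} (hκ : κ ≠ 0) (hy : 0 < y) :
    HasDerivAt (fun s : ℝ => z * (s - β ^ (-(κ - 1)) / κ * s ^ κ))
      (z * (1 - β ^ (-(κ - 1)) * y ^ (κ - 1))) y := by
  have h1 : HasDerivAt (fun s : ℝ => s - β ^ (-(κ - 1)) / κ * s ^ κ)
      (1 - β ^ (-(κ - 1)) / κ * (κ * y ^ (κ - 1))) y :=
    (hasDerivAt_id y).sub ((Real.hasDerivAt_rpow_const (Or.inl hy.ne')).const_mul _)
  have h2 := h1.const_mul z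
  refine h2.congr_deriv ?_
  field_simp

private lemma zt_bpow {β κ : ℝ} (hβ : 0 < β) : β ^ (-(κ - 1)) * β ^ (κ - 1) = 1 := by
  rw [← Real.rpow_add hβ]; simp

private lemma zt_nonpos {β κ z y : ℝ} (hβ : 0 < β) (hκ1 : κ ≤ 1) (hz : 0 ≤ z)
    (hy : 0 < y) (hyβ : y ≤ β) :
    z * (1 - β ^ (-(κ - 1)) * y ^ (κ - 1)) ≤ 0 := by
  have hb : (0:ℝ) < β ^ (-(κ - 1)) := Real.rpow_pos_of_pos hβ _
  have h1 : β ^ (κ - 1) ≤ y ^ (κ - 1) := Real.rpow_le_rpow_of_nonpos hy hyβ (by linarith)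
  have h2 := zt_bpow (κ := κ) hβ
  nlinarith [mul_le_mul_of_nonneg_left h1 hb.le]

private lemma zt_d2 {β κ z y : ℝ} (hy : 0 < y) :
    HasDerivAt (fun s : ℝ => z * (1 - β ^ (-(κ - 1)) * s ^ (κ - 1)))
      (z * (β ^ (-(κ - 1)) * ((1 - κ) * y ^ (κ - 2)))) y := by
  have h1 := (((Real.hasDerivAt_rpow_const (p := κ - 1) (Or.inl hy.ne')).const_mul
      (β ^ (-(κ - 1)))).const_sub 1).const_mul z
  refine h1.congr_deriv ?_
  rw [show κ - 2 = κ - 1 - 1 by ring]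
  ring

private lemma zt_d2_nonneg {β κ z y : ℝ} (hβ : 0 < β) (hκ1 : κ ≤ 1) (hz : 0 ≤ z) (hy : 0 < y) :
    0 ≤ z * (β ^ (-(κ - 1)) * ((1 - κ) * y ^ (κ - 2))) :=
  mul_nonneg hz (mul_nonneg (Real.rpow_pos_of_pos hβ _).le
    (mul_nonneg (by linarith) (Real.rpow_pos_of_pos hy _).le))

open Filter in
private lemma rpow_tendsto_atTop {e : ℝ} (he : e < 0) :
    Tendsto (fun y : ℝ => y ^ e) (nhdsWithin 0 (Set.Ioi 0)) atTop := by
  have h := (tendsto_rpow_atTop (by linarith : (0:ℝ) < -e)).comp tendsto_inv_nhdsGT_zero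
  refine h.congr' ?_
  filter_upwards [self_mem_nhdsWithin] with y hy
  have hy' : (0:ℝ) < y := hy
  simp only [Function.comp]
  rw [Real.inv_rpow hy'.le, ← Real.rpow_neg hy'.le, neg_neg]

/-- Monotonicity, strict convexity in `y`, and the boundary/asymptotic behaviour of the
dual value function `ĥv(·,z)` on `(0,β]`. -/
theorem stmt_4 (α β ρ μZ η p κ : ℝ) (hα : 0 < α) (hβ : 0 < β)
    (hρ : μZ < ρ) (hμη : η ≤ μZ) (hp : p < 1) (hρp : α * p < ρ * (1 - p))
    (hκ : κ ∈ Set.Ioc (0 : ℝ) 1)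
    (hκroot : α * κ ^ 2 + (ρ - η - α) * κ + (μZ - ρ) = 0)
    (hv : ℝ → ℝ → ℝ)
    (hhv : ∀ y z : ℝ, 0 < y → hv y z =
      if p = 0 then
        -(1 / ρ) * Real.log y - 2 / ρ + α / ρ ^ 2 + y / (ρ * β)
          + z * (y - β ^ (-(κ - 1)) / κ * y ^ κ)
      else
        (1 - p) ^ 3 / (p * (ρ * (1 - p) - α * p)) * y ^ (-p / (1 - p))
          + (1 - p) ^ 2 / (ρ * (1 - p) - α * p) * β ^ (-(1 / (1 - p))) * y
          + z * (y - β ^ (-(κ - 1)) / κ * y ^ κ)) :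
    ∀ z : ℝ, 0 ≤ z →
      (∀ y ∈ Set.Ioc (0 : ℝ) β, deriv (fun s => hv s z) y ≤ 0) ∧
      deriv (fun s => hv s z) β = 0 ∧
      (∀ y ∈ Set.Ioc (0 : ℝ) β, 0 < deriv (deriv (fun s => hv s z)) y) ∧
      Filter.Tendsto (fun y => deriv (fun s => hv s z) y)
        (nhdsWithin 0 (Set.Ioi 0)) Filter.atBot := by
  obtain ⟨hκ0, hκ1⟩ := hκ
  intro z hz
  by_cases hp0 : p = 0
  · -- case p = 0
    subst hp0
    have hρ0 : (0:ℝ) < ρ := by simpa using hρp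
    have hF : ∀ y : ℝ, 0 < y → HasDerivAt (fun s => hv s z)
        (-(1/ρ) * y⁻¹ + 1/(ρ*β) + z * (1 - β ^ (-(κ - 1)) * y ^ (κ - 1))) y := by
      intro y hy
      have hev : (fun s => hv s z) =ᶠ[nhds y]
          (fun s => -(1 / ρ) * Real.log s - 2 / ρ + α / ρ ^ 2 + s / (ρ * β)
            + z * (s - β ^ (-(κ - 1)) / κ * s ^ κ)) := by
        filter_upwards [Ioi_mem_nhds hy] with s hs
        rw [hhv s z hs, if_pos rfl]
      have h1 : HasDerivAt (fun s : ℝ => -(1/ρ) * Real.log s) (-(1/ρ) * y⁻¹) y :=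
        (Real.hasDerivAt_log hy.ne').const_mul _
      have h2 := ((h1.sub_const (2/ρ)).add_const (α/ρ^2)).add
        ((hasDerivAt_id y).div_const (ρ*β))
      have h3 := h2.add (zt_d1 (β := β) (z := z) hκ0.ne' hy)
      refine HasDerivAt.congr_of_eventuallyEq ?_ hev
      exact h3
    have hDeq : ∀ y : ℝ, 0 < y → deriv (fun s => hv s z) y =
        -(1/ρ) * y⁻¹ + 1/(ρ*β) + z * (1 - β ^ (-(κ - 1)) * y ^ (κ - 1)) :=
      fun y hy => (hF y hy).deriv
    have hmain_le : ∀ y : ℝ, 0 < y → y ≤ β → -(1/ρ) * y⁻¹ + 1/(ρ*β) ≤ 0 := by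
      intro y hy hyβ
      have h1 : β⁻¹ ≤ y⁻¹ := by
        rw [inv_le_inv₀ hβ hy]; exact hyβ
      have h2 : (0:ℝ) ≤ 1/ρ := by positivity
      have h4 : 1/(ρ*β) = 1/ρ * β⁻¹ := by rw [one_div, mul_inv, one_div]
      nlinarith [mul_le_mul_of_nonneg_left h1 h2]
    refine ⟨?_, ?_, ?_, ?_⟩
    · rintro y ⟨hy, hyβ⟩
      rw [hDeq y hy]
      have hzt := zt_nonpos hβ hκ1 hz hy hyβ
      linarith [hmain_le y hy hyβ]
    · rw [hDeq β hβ, zt_bpow hβ]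
      field_simp
      ring
    · rintro y ⟨hy, hyβ⟩
      have hev2 : deriv (fun s => hv s z) =ᶠ[nhds y]
          (fun s => -(1/ρ) * s⁻¹ + 1/(ρ*β) + z * (1 - β ^ (-(κ - 1)) * s ^ (κ - 1))) := by
        filter_upwards [Ioi_mem_nhds hy] with s hs
        exact hDeq s hs
      rw [hev2.deriv_eq]
      have hd2 : HasDerivAt
          (fun s : ℝ => -(1/ρ) * s⁻¹ + 1/(ρ*β) + z * (1 - β ^ (-(κ - 1)) * s ^ (κ - 1)))
          (-(1/ρ) * (-(y^2)⁻¹) + z * (β ^ (-(κ - 1)) * ((1 - κ) * y ^ (κ - 2)))) y := by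
        exact (((hasDerivAt_inv hy.ne').const_mul (-(1/ρ))).add_const (1/(ρ*β))).add (zt_d2 hy)
      rw [hd2.deriv]
      have hpos : 0 < -(1/ρ) * (-(y^2)⁻¹) := by
        rw [neg_mul_neg]; positivity
      linarith [zt_d2_nonneg (β := β) (κ := κ) (z := z) hβ hκ1 hz hy]
    · have hev3 : (fun y => deriv (fun s => hv s z) y) =ᶠ[nhdsWithin 0 (Set.Ioi 0)]
          (fun y => -(1/ρ) * y⁻¹ + 1/(ρ*β) + z * (1 - β ^ (-(κ - 1)) * y ^ (κ - 1))) := by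
        filter_upwards [self_mem_nhdsWithin] with y hy
        exact hDeq y hy
      rw [Filter.tendsto_congr' hev3]
      have h1 : Filter.Tendsto (fun y : ℝ => (1/ρ) * y⁻¹) (nhdsWithin 0 (Set.Ioi 0))
          Filter.atTop :=
        (tendsto_inv_nhdsGT_zero).const_mul_atTop (by positivity)
      have h2 : Filter.Tendsto (fun y : ℝ => -(1/ρ) * y⁻¹ + 1/(ρ*β))
          (nhdsWithin 0 (Set.Ioi 0)) Filter.atBot := by
        have h3 := Filter.tendsto_neg_atTop_atBot.comp h1
        refine Filter.tendsto_atBot_add_const_right _ _ (h3.congr fun y => ?_)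
        simp [Function.comp]
      refine Filter.tendsto_atBot_mono' _ ?_ h2
      filter_upwards [Ioo_mem_nhdsGT_of_mem ⟨le_rfl, hβ⟩] with y hy
      have := zt_nonpos hβ hκ1 hz hy.1 hy.2.le
      linarith
  · -- case p ≠ 0
    have h1p : (0:ℝ) < 1 - p := by linarith
    have hD : (0:ℝ) < ρ * (1 - p) - α * p := by linarith
    set e : ℝ := -(1/(1-p)) with he_def
    set C : ℝ := (1-p)^2/(ρ*(1-p)-α*p) with hC_def
    have he : e < 0 := by
      rw [he_def]; simp only [neg_neg, neg_lt, neg_zero]; positivity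
    have hC : 0 < C := by rw [hC_def]; positivity
    have hF : ∀ y : ℝ, 0 < y → HasDerivAt (fun s => hv s z)
        (-C * y ^ e + C * β ^ e + z * (1 - β ^ (-(κ - 1)) * y ^ (κ - 1))) y := by
      intro y hy
      have hev : (fun s => hv s z) =ᶠ[nhds y]
          (fun s => (1 - p) ^ 3 / (p * (ρ * (1 - p) - α * p)) * s ^ (-p / (1 - p))
            + (1 - p) ^ 2 / (ρ * (1 - p) - α * p) * β ^ (-(1 / (1 - p))) * s
            + z * (s - β ^ (-(κ - 1)) / κ * s ^ κ)) := by
        filter_upwards [Ioi_mem_nhds hy] with s hs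
        rw [hhv s z hs, if_neg hp0]
      have h1 : HasDerivAt (fun s : ℝ => (1 - p) ^ 3 / (p * (ρ * (1 - p) - α * p)) * s ^ (-p / (1 - p)))
          ((1 - p) ^ 3 / (p * (ρ * (1 - p) - α * p)) * (-p / (1 - p) * y ^ (-p / (1 - p) - 1))) y :=
        (Real.hasDerivAt_rpow_const (Or.inl hy.ne')).const_mul _
      have h2 : HasDerivAt (fun s : ℝ => (1 - p) ^ 2 / (ρ * (1 - p) - α * p) * β ^ (-(1 / (1 - p))) * s)
          ((1 - p) ^ 2 / (ρ * (1 - p) - α * p) * β ^ (-(1 / (1 - p)))) y := by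
        simpa using (hasDerivAt_id y).const_mul ((1 - p) ^ 2 / (ρ * (1 - p) - α * p) * β ^ (-(1 / (1 - p))))
      have h3 := (h1.add h2).add (zt_d1 (β := β) (z := z) hκ0.ne' hy)
      refine HasDerivAt.congr_of_eventuallyEq ?_ hev
      refine h3.congr_deriv ?_
      rw [show -p / (1 - p) - 1 = e by rw [he_def]; field_simp; ring]
      rw [hC_def, he_def]
      have hDne : ρ * (1 - p) - α * p ≠ 0 := hD.ne'
      have h1pne : (1:ℝ) - p ≠ 0 := h1p.ne'
      field_simp
    have hDeq : ∀ y : ℝ, 0 < y → deriv (fun s => hv s z) y =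
        -C * y ^ e + C * β ^ e + z * (1 - β ^ (-(κ - 1)) * y ^ (κ - 1)) :=
      fun y hy => (hF y hy).deriv
    have hmain_le : ∀ y : ℝ, 0 < y → y ≤ β → -C * y ^ e + C * β ^ e ≤ 0 := by
      intro y hy hyβ
      have h1 : β ^ e ≤ y ^ e := Real.rpow_le_rpow_of_nonpos hy hyβ he.le
      nlinarith [mul_le_mul_of_nonneg_left h1 hC.le]
    refine ⟨?_, ?_, ?_, ?_⟩
    · rintro y ⟨hy, hyβ⟩
      rw [hDeq y hy]
      have hzt := zt_nonpos hβ hκ1 hz hy hyβ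
      linarith [hmain_le y hy hyβ]
    · rw [hDeq β hβ, zt_bpow hβ]
      ring
    · rintro y ⟨hy, hyβ⟩
      have hev2 : deriv (fun s => hv s z) =ᶠ[nhds y]
          (fun s => -C * s ^ e + C * β ^ e + z * (1 - β ^ (-(κ - 1)) * s ^ (κ - 1))) := by
        filter_upwards [Ioi_mem_nhds hy] with s hs
        exact hDeq s hs
      rw [hev2.deriv_eq]
      have hd2 : HasDerivAt
          (fun s : ℝ => -C * s ^ e + C * β ^ e + z * (1 - β ^ (-(κ - 1)) * s ^ (κ - 1)))
          (-C * (e * y ^ (e - 1)) + z * (β ^ (-(κ - 1)) * ((1 - κ) * y ^ (κ - 2)))) y :=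
        (((Real.hasDerivAt_rpow_const (Or.inl hy.ne')).const_mul (-C)).add_const
          (C * β ^ e)).add (zt_d2 hy)
      rw [hd2.deriv]
      have hry : 0 < y ^ (e - 1) := Real.rpow_pos_of_pos hy _
      have hpos : 0 < -C * (e * y ^ (e - 1)) := by nlinarith [mul_pos hC (mul_pos (neg_pos.mpr he) hry)]
      linarith [zt_d2_nonneg (β := β) (κ := κ) (z := z) hβ hκ1 hz hy]
    · have hev3 : (fun y => deriv (fun s => hv s z) y) =ᶠ[nhdsWithin 0 (Set.Ioi 0)]
          (fun y => -C * y ^ e + C * β ^ e + z * (1 - β ^ (-(κ - 1)) * y ^ (κ - 1))) := by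
        filter_upwards [self_mem_nhdsWithin] with y hy
        exact hDeq y hy
      rw [Filter.tendsto_congr' hev3]
      have h1 : Filter.Tendsto (fun y : ℝ => C * y ^ e) (nhdsWithin 0 (Set.Ioi 0))
          Filter.atTop := (rpow_tendsto_atTop he).const_mul_atTop hC
      have h2 : Filter.Tendsto (fun y : ℝ => -C * y ^ e + C * β ^ e)
          (nhdsWithin 0 (Set.Ioi 0)) Filter.atBot := by
        have h3 := Filter.tendsto_neg_atTop_atBot.comp h1
        refine Filter.tendsto_atBot_add_const_right _ _ (h3.congr fun y => ?_)
        simp [Function.comp]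
      refine Filter.tendsto_atBot_mono' _ ?_ h2
      filter_upwards [Ioo_mem_nhdsGT_of_mem ⟨le_rfl, hβ⟩] with y hy
      have := zt_nonpos hβ hκ1 hz hy.1 hy.2.le
      linarith
end

section
/- Fix α>0, β>0, ρ, μ_Z, η ∈ ℝ with ρ>μ_Z and μ_Z≥η, p<1 with p≠0 and ρ(1−p)>αp, and let κ∈(0,1] be the positive root of ακ²+(ρ−η−α)κ+(μ_Z−ρ)=0. Then for every (x,z)∈[0,∞)² there exists a unique y=f(x,z)∈(0,β] satisfying x = (1−p)²/(ρ(1−p)−αp)·(y^{−1/(1−p)} − β^{−1/(1−p)}) + z·(β^{−(κ−1)}·y^{κ−1} − 1); moreover f(0,z)=β for every z≥0. The analogous statement holds when p=0 with the equation x = 1/(ρy) − 1/(ρβ) + z·(β^{−(κ−1)}·y^{κ−1} − 1). -/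
open Real

lemma key_aux (C e β κ : ℝ) (hC : 0 < C) (he : 0 < e) (hβ : 0 < β)
    (hκ0 : 0 < κ) (hκ1 : κ ≤ 1) (x z : ℝ) (hx : 0 ≤ x) (hz : 0 ≤ z) :
    ∃! y : ℝ, y ∈ Set.Ioc (0 : ℝ) β ∧
      x = C * (y ^ (-e) - β ^ (-e)) + z * (β ^ (-(κ - 1)) * y ^ (κ - 1) - 1) := by
  set g : ℝ → ℝ := fun y => C * (y ^ (-e) - β ^ (-e)) + z * (β ^ (-(κ - 1)) * y ^ (κ - 1) - 1)
    with hg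
  have hκ1' : κ - 1 ≤ 0 := by linarith
  have hgβ : g β = 0 := by
    simp only [hg]
    rw [← Real.rpow_add hβ]
    simp
  have hanti : StrictAntiOn g (Set.Ioi (0:ℝ)) := by
    intro y₁ hy₁ y₂ hy₂ h12
    simp only [Set.mem_Ioi] at hy₁ hy₂
    have h1 : y₂ ^ (-e) < y₁ ^ (-e) :=
      Real.rpow_lt_rpow_of_neg hy₁ h12 (by linarith)
    have h2 : y₂ ^ (κ - 1) ≤ y₁ ^ (κ - 1) :=
      Real.rpow_le_rpow_of_nonpos hy₁ h12.le hκ1'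
    have hD : (0:ℝ) ≤ β ^ (-(κ - 1)) := (Real.rpow_pos_of_pos hβ _).le
    have := mul_le_mul_of_nonneg_left h2 hD
    have := mul_le_mul_of_nonneg_left (sub_le_sub_right this 1) hz
    have := mul_lt_mul_of_pos_left (sub_lt_sub_right h1 (β ^ (-e))) hC
    simp only [hg]
    linarith
  -- choose y₀
  have hB : (0:ℝ) < x / C + β ^ (-e) := by
    have := Real.rpow_pos_of_pos hβ (-e)
    have := div_nonneg hx hC.le
    linarith
  set y₀ : ℝ := (x / C + β ^ (-e)) ^ (-e⁻¹) with hy₀def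
  have hy₀pos : 0 < y₀ := Real.rpow_pos_of_pos hB _
  have hy₀e : y₀ ^ (-e) = x / C + β ^ (-e) := by
    rw [hy₀def, ← Real.rpow_mul hB.le, show -e⁻¹ * -e = 1 by field_simp, Real.rpow_one]
  have hy₀β : y₀ ≤ β := by
    have hb : β ^ (-e) ≤ x / C + β ^ (-e) := by
      have := div_nonneg hx hC.le; linarith
    have := Real.rpow_le_rpow_of_nonpos (Real.rpow_pos_of_pos hβ (-e)) hb
      (neg_nonpos.mpr (inv_nonneg.mpr he.le))
    calc y₀ ≤ (β ^ (-e)) ^ (-e⁻¹) := this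
      _ = β := by
        rw [← Real.rpow_mul hβ.le]
        rw [show -e * -e⁻¹ = 1 by field_simp, Real.rpow_one]
  have hgy₀ : x ≤ g y₀ := by
    have h2 : β ^ (κ - 1) ≤ y₀ ^ (κ - 1) :=
      Real.rpow_le_rpow_of_nonpos hy₀pos hy₀β hκ1'
    have hD : (0:ℝ) < β ^ (-(κ - 1)) := Real.rpow_pos_of_pos hβ _
    have h3 : (1:ℝ) ≤ β ^ (-(κ - 1)) * y₀ ^ (κ - 1) := by
      have : β ^ (-(κ - 1)) * β ^ (κ - 1) ≤ β ^ (-(κ - 1)) * y₀ ^ (κ - 1) :=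
        mul_le_mul_of_nonneg_left h2 hD.le
      rwa [← Real.rpow_add hβ, neg_add_cancel, Real.rpow_zero] at this
    have h4 : 0 ≤ z * (β ^ (-(κ - 1)) * y₀ ^ (κ - 1) - 1) :=
      mul_nonneg hz (by linarith)
    have h5 : C * (y₀ ^ (-e) - β ^ (-e)) = x := by
      rw [hy₀e]; field_simp; ring
    simp only [hg]; linarith
  -- IVT
  have hne : ∀ y ∈ Set.Icc y₀ β, (id y : ℝ) ≠ 0 ∨ True :=
    fun y hy => Or.inl (ne_of_gt (lt_of_lt_of_le hy₀pos hy.1))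
  have hcont : ContinuousOn g (Set.Icc y₀ β) := by
    rw [hg]
    apply ContinuousOn.add
    · exact continuousOn_const.mul ((continuousOn_id.rpow_const
        (fun y hy => Or.inl (ne_of_gt (lt_of_lt_of_le hy₀pos hy.1)))).sub continuousOn_const)
    · exact continuousOn_const.mul ((continuousOn_const.mul (continuousOn_id.rpow_const
        (fun y hy => Or.inl (ne_of_gt (lt_of_lt_of_le hy₀pos hy.1))))).sub continuousOn_const)
  have hmem : x ∈ Set.Icc (g β) (g y₀) := ⟨by rw [hgβ]; exact hx, hgy₀⟩
  obtain ⟨y, hyIcc, hgy⟩ := intermediate_value_Icc' hy₀β hcont hmem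
  have hyIoc : y ∈ Set.Ioc (0:ℝ) β := ⟨lt_of_lt_of_le hy₀pos hyIcc.1, hyIcc.2⟩
  refine ⟨y, ⟨hyIoc, hgy.symm⟩, ?_⟩
  rintro y' ⟨hy', hx'⟩
  exact hanti.injOn (Set.mem_of_mem_of_subset hy' Set.Ioc_subset_Ioi_self)
    (Set.mem_of_mem_of_subset hyIoc Set.Ioc_subset_Ioi_self) (by rw [hgy]; exact hx'.symm)

/-- Existence and uniqueness of the Legendre inversion point `f(x,z) ∈ (0,β]`
solving the first-order condition, with `f(0,z) = β`; both for `p ≠ 0` and `p = 0`. -/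
theorem stmt_5 (α β ρ μZ η p κ : ℝ) (hα : 0 < α) (hβ : 0 < β)
    (hρ : μZ < ρ) (hμη : η ≤ μZ) (hp : p < 1) (hρp : α * p < ρ * (1 - p))
    (hκ : κ ∈ Set.Ioc (0 : ℝ) 1)
    (hκroot : α * κ ^ 2 + (ρ - η - α) * κ + (μZ - ρ) = 0) :
    (p ≠ 0 →
      (∀ x z : ℝ, 0 ≤ x → 0 ≤ z →
        ∃! y : ℝ, y ∈ Set.Ioc (0 : ℝ) β ∧
          x = (1 - p) ^ 2 / (ρ * (1 - p) - α * p) *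
                (y ^ (-(1 / (1 - p))) - β ^ (-(1 / (1 - p))))
              + z * (β ^ (-(κ - 1)) * y ^ (κ - 1) - 1)) ∧
      (∀ z : ℝ, 0 ≤ z →
        (0 : ℝ) = (1 - p) ^ 2 / (ρ * (1 - p) - α * p) *
              (β ^ (-(1 / (1 - p))) - β ^ (-(1 / (1 - p))))
            + z * (β ^ (-(κ - 1)) * β ^ (κ - 1) - 1))) ∧
    (p = 0 →
      (∀ x z : ℝ, 0 ≤ x → 0 ≤ z →
        ∃! y : ℝ, y ∈ Set.Ioc (0 : ℝ) β ∧
          x = 1 / (ρ * y) - 1 / (ρ * β)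
              + z * (β ^ (-(κ - 1)) * y ^ (κ - 1) - 1)) ∧
      (∀ z : ℝ, 0 ≤ z →
        (0 : ℝ) = 1 / (ρ * β) - 1 / (ρ * β)
            + z * (β ^ (-(κ - 1)) * β ^ (κ - 1) - 1))) := by
  
  obtain ⟨hκ0, hκ1⟩ := hκ
  constructor
  · intro hpne
    have h1p : 0 < 1 - p := by linarith
    have hC : 0 < (1 - p) ^ 2 / (ρ * (1 - p) - α * p) :=
      div_pos (by positivity) (by linarith)
    refine ⟨fun x z hx hz =>
      key_aux _ (1 / (1 - p)) β κ hC (by positivity) hβ hκ0 hκ1 x z hx hz, ?_⟩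
    intro z hz
    rw [← Real.rpow_add hβ]
    simp
  · intro hp0
    subst hp0
    have hρ0 : 0 < ρ := by simpa using hρp
    constructor
    · intro x z hx hz
      have conv : ∀ w : ℝ, 0 < w →
          1 / ρ * (w ^ (-(1:ℝ)) - β ^ (-(1:ℝ))) = 1 / (ρ * w) - 1 / (ρ * β) := by
        intro w hw
        rw [Real.rpow_neg_one, Real.rpow_neg_one]
        field_simp
      obtain ⟨y, ⟨hy, heq⟩, hu⟩ :=
        key_aux (1 / ρ) 1 β κ (by positivity) one_pos hβ hκ0 hκ1 x z hx hz
      refine ⟨y, ⟨hy, by rw [← conv y hy.1]; exact heq⟩, ?_⟩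
      rintro y' ⟨hy', heq'⟩
      exact hu y' ⟨hy', by rw [conv y' hy'.1]; exact heq'⟩
    · intro z hz
      rw [← Real.rpow_add hβ]
      simp
end

section
/- Let μ>0, σ>0, β∈(0,∞), p<1 with p≠0, ρ>0 with ρ(1−p)>αp where α=μ²/(2σ²). Suppose κ=1 (the case μ_Z=σ_Z=η=0) and let x≥0 and y∈(0,β] satisfy x = (1−p)²/(ρ(1−p)−αp)·(y^{−1/(1−p)} − β^{−1/(1−p)}). Then c* := y^{1/(p−1)} = ((ρ(1−p)−αp)/(1−p)²)·x + β^{−1/(1−p)} and θ* := (μ/σ²)·((1−p)/(ρ(1−p)−αp))·y^{−1/(1−p)} = (μ/(σ²(1−p)))·x + (μ/σ²)·((1−p)/(ρ(1−p)−αp))·β^{−1/(1−p)}; that is, the optimal portfolio and consumption equal the classical Merton feedbacks θ^Mer(x)=(μ/(σ²(1−p)))x and c^Mer(x)=((ρ(1−p)−αp)/(1−p)²)x plus strictly positive, wealth-independent adjustment terms induced by the allowance of capital injection. -/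
open Real

/-- In the case `κ = 1` with finite injection cost `β`, the optimal feedback controls equal
the Merton feedbacks plus strictly positive wealth-independent adjustment terms. -/
theorem stmt_8 (μ σ β p ρ α x y : ℝ) (hμ : 0 < μ) (hσ : 0 < σ) (hβ : 0 < β)
    (hp : p < 1) (hp0 : p ≠ 0) (hρ : 0 < ρ)
    (hα : α = μ ^ 2 / (2 * σ ^ 2)) (hρp : α * p < ρ * (1 - p))
    (hx : 0 ≤ x) (hy : y ∈ Set.Ioc (0 : ℝ) β)
    (heq : x = (1 - p) ^ 2 / (ρ * (1 - p) - α * p) *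
        (y ^ (-(1 / (1 - p))) - β ^ (-(1 / (1 - p))))) :
    y ^ (1 / (p - 1)) = (ρ * (1 - p) - α * p) / (1 - p) ^ 2 * x + β ^ (-(1 / (1 - p))) ∧
    μ / σ ^ 2 * ((1 - p) / (ρ * (1 - p) - α * p)) * y ^ (-(1 / (1 - p)))
      = μ / (σ ^ 2 * (1 - p)) * x
        + μ / σ ^ 2 * ((1 - p) / (ρ * (1 - p) - α * p)) * β ^ (-(1 / (1 - p))) ∧
    0 < β ^ (-(1 / (1 - p))) ∧
    0 < μ / σ ^ 2 * ((1 - p) / (ρ * (1 - p) - α * p)) * β ^ (-(1 / (1 - p))) := by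
  have h1p : (0:ℝ) < 1 - p := by linarith
  have h1pne : (1:ℝ) - p ≠ 0 := ne_of_gt h1p
  have hA : 0 < ρ * (1 - p) - α * p := by linarith
  have hAne : ρ * (1 - p) - α * p ≠ 0 := ne_of_gt hA
  have key : y ^ (-(1 / (1 - p)))
      = (ρ * (1 - p) - α * p) / (1 - p) ^ 2 * x + β ^ (-(1 / (1 - p))) := by
    have hD : (1 - p) * ρ - p * α ≠ 0 := by intro h; apply hAne; linarith
    field_simp at heq ⊢
    linear_combination -heq
  have hB : 0 < β ^ (-(1 / (1 - p))) := rpow_pos_of_pos hβ _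
  have hexp : (1:ℝ) / (p - 1) = -(1 / (1 - p)) := by
    rw [show p - 1 = -(1 - p) by ring, div_neg]
  refine ⟨by rw [hexp, key], ?_, hB, ?_⟩
  · rw [key, mul_add]
    congr 1
    generalize ρ * (1 - p) - α * p = A at hAne ⊢
    field_simp
  · have h1 : 0 < μ / σ ^ 2 := by positivity
    have h2 : 0 < (1 - p) / (ρ * (1 - p) - α * p) := by positivity
    positivity
end

section
/- Fix α>0, β>0, ρ, μ_Z, η ∈ ℝ with ρ>μ_Z and μ_Z>η, p<1 with p≠0 and ρ(1−p)>αp, and let κ∈(0,1) be the positive root of ακ²+(ρ−η−α)κ+(μ_Z−ρ)=0. Set p₁ = −κ/(1−κ) and C*(q) = (ρ(1−q)−αq)/(1−q)². Then for every fixed z>0, the limit of c*(x,z)/x as x→+∞ equals: C*(p) if p>p₁; C*(p₁)/(1 + C*(p₁)·β^{1/(1−p₁)}·z) if p=p₁; and 0 if p<p₁. -/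
open Real

set_option maxHeartbeats 1600000 in
/-- Asymptotics of the optimal consumption-to-wealth ratio `c*(x,z)/x` as `x → ∞`. -/
theorem stmt_9 (α β ρ μZ η p κ : ℝ) (hα : 0 < α) (hβ : 0 < β)
    (hρ : μZ < ρ) (hμη : η < μZ) (hp : p < 1) (hp0 : p ≠ 0)
    (hρp : α * p < ρ * (1 - p))
    (hκ : κ ∈ Set.Ioo (0 : ℝ) 1)
    (hκroot : α * κ ^ 2 + (ρ - η - α) * κ + (μZ - ρ) = 0)
    (p₁ : ℝ) (hp₁ : p₁ = -κ / (1 - κ))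
    (Cstar : ℝ → ℝ) (hC : ∀ q : ℝ, Cstar q = (ρ * (1 - q) - α * q) / (1 - q) ^ 2)
    (f : ℝ → ℝ → ℝ)
    (hf : ∀ x z : ℝ, 0 ≤ x → 0 ≤ z → f x z ∈ Set.Ioc (0 : ℝ) β ∧
      x = (1 - p) ^ 2 / (ρ * (1 - p) - α * p) *
            ((f x z) ^ (-(1 / (1 - p))) - β ^ (-(1 / (1 - p))))
          + z * (β ^ (-(κ - 1)) * (f x z) ^ (κ - 1) - 1))
    (z : ℝ) (hz : 0 < z) :
    Filter.Tendsto (fun x : ℝ => (f x z) ^ (1 / (p - 1)) / x) Filter.atTop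
      (nhds (if p₁ < p then Cstar p
        else if p = p₁ then Cstar p₁ / (1 + Cstar p₁ * β ^ (1 / (1 - p₁)) * z)
        else 0)) := by
  obtain ⟨hκ0, hκ1⟩ := hκ
  have h1p : (0:ℝ) < 1 - p := by linarith
  have h1κ : (0:ℝ) < 1 - κ := by linarith
  have hDpos : (0:ℝ) < ρ * (1 - p) - α * p := by linarith
  set A : ℝ := (1 - p) ^ 2 / (ρ * (1 - p) - α * p) with hA
  have hApos : 0 < A := div_pos (by positivity) hDpos
  set B : ℝ := z * β ^ (1 - κ) with hB
  have hBpos : 0 < B := mul_pos hz (Real.rpow_pos_of_pos hβ _)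
  set c₀ : ℝ := A * β ^ (-(1/(1-p))) + z with hc₀
  set θ : ℝ := (1 - κ) * (1 - p) with hθdef
  have hθpos : 0 < θ := mul_pos h1κ h1p
  set u : ℝ → ℝ := fun x => (f x z) ^ (-(1/(1-p))) with hudef
  set G : ℝ → ℝ := fun v => 1 / (A + B * v ^ (θ - 1) - c₀ / v) with hG
  clear_value A B c₀ θ u G
  have hkey : ∀ x : ℝ, 0 ≤ x → 0 < u x ∧ x = A * u x + B * (u x) ^ θ - c₀ := by
    intro x hx
    obtain ⟨⟨hy0, hyβ⟩, hxeq⟩ := hf x z hx hz.le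
    have hux : u x = (f x z) ^ (-(1/(1-p))) := by rw [hudef]
    have hupos : 0 < u x := by rw [hux]; exact Real.rpow_pos_of_pos hy0 _
    refine ⟨hupos, ?_⟩
    have hyθ : (u x) ^ θ = (f x z) ^ (κ - 1) := by
      rw [hux, ← Real.rpow_mul hy0.le]
      congr 1
      rw [hθdef]
      field_simp
      ring
    have hbe : β ^ (-(κ-1)) = β ^ (1-κ) := by congr 1; ring
    rw [hbe, ← hyθ, ← hux] at hxeq
    rw [hB, hc₀]
    linear_combination hxeq
  have huTop : Filter.Tendsto u Filter.atTop Filter.atTop := by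
    rw [Filter.tendsto_atTop]
    intro b
    set M : ℝ := max b 1 with hM
    filter_upwards [Filter.eventually_ge_atTop (A*M + B*M^θ + |c₀| + 1),
      Filter.eventually_ge_atTop (0:ℝ)] with x hx hx0
    obtain ⟨hupos, hxeq⟩ := hkey x hx0
    by_contra h
    push_neg at h
    have hub : u x ≤ M := le_trans h.le (le_max_left _ _)
    have hMθ : (u x) ^ θ ≤ M ^ θ := Real.rpow_le_rpow hupos.le hub hθpos.le
    have h1 : A * u x ≤ A * M := by nlinarith
    have h2 : B * (u x) ^ θ ≤ B * M ^ θ := by nlinarith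
    have h3 : -c₀ ≤ |c₀| := neg_le_abs c₀
    linarith
  have heq : (fun x : ℝ => (f x z) ^ (1/(p-1)) / x) =ᶠ[Filter.atTop] fun x => G (u x) := by
    filter_upwards [Filter.eventually_ge_atTop (0:ℝ)] with x hx0
    obtain ⟨hupos, hxeq⟩ := hkey x hx0
    have hcx : (f x z) ^ (1/(p-1)) = u x := by
      rw [hudef]
      congr 1
      rw [show p - 1 = -(1-p) by ring, div_neg]
    rw [hcx, hG]
    have hden : A + B * (u x) ^ (θ - 1) - c₀ / u x = x / u x := by
      rw [eq_div_iff hupos.ne', Real.rpow_sub hupos, Real.rpow_one]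
      field_simp
      linarith [hxeq]
    simp only [hden, one_div_div]
  have hθ1 : θ - 1 = (1 - κ) * (p₁ - p) := by
    rw [hp₁, hθdef]
    field_simp
    ring
  have hmain : Filter.Tendsto (fun x : ℝ => (f x z) ^ (1/(p-1)) / x) Filter.atTop
      (nhds (if p₁ < p then Cstar p
        else if p = p₁ then Cstar p₁ / (1 + Cstar p₁ * β ^ (1 / (1 - p₁)) * z)
        else 0)) := by
    rcases lt_trichotomy p₁ p with hcase | hcase | hcase
    · -- θ < 1
      rw [if_pos hcase]
      have hθlt : θ - 1 < 0 := by rw [hθ1]; nlinarith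
      have h1 : Filter.Tendsto (fun v : ℝ => B * v ^ (θ - 1)) Filter.atTop (nhds 0) := by
        have := (tendsto_rpow_neg_atTop (by linarith : 0 < 1 - θ)).const_mul B
        simpa [show -(1-θ) = θ - 1 by ring] using this
      have h2 : Filter.Tendsto (fun v : ℝ => c₀ / v) Filter.atTop (nhds 0) := by
        simpa [div_eq_mul_inv] using tendsto_inv_atTop_zero.const_mul c₀
      have hden : Filter.Tendsto (fun v : ℝ => A + B * v ^ (θ - 1) - c₀ / v)
          Filter.atTop (nhds A) := by
        have := ((tendsto_const_nhds : Filter.Tendsto (fun _ : ℝ => A) Filter.atTop (nhds A)).add h1).sub h2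
        simpa using this
      have hGlim : Filter.Tendsto G Filter.atTop (nhds (1/A)) := by
        rw [hG]
        simpa [one_div] using hden.inv₀ hApos.ne'
      have hval : Cstar p = 1 / A := by
        rw [hC p, hA, one_div_div]
      rw [hval]
      exact (hGlim.comp huTop).congr' heq.symm
    · -- θ = 1
      rw [if_neg (by rw [hcase]; exact lt_irrefl p), if_pos hcase.symm]
      have hθeq : θ - 1 = 0 := by rw [hθ1, ← hcase]; ring
      have h2 : Filter.Tendsto (fun v : ℝ => c₀ / v) Filter.atTop (nhds 0) := by
        simpa [div_eq_mul_inv] using tendsto_inv_atTop_zero.const_mul c₀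
      have hden : Filter.Tendsto (fun v : ℝ => A + B * v ^ (θ - 1) - c₀ / v)
          Filter.atTop (nhds (A + B)) := by
        have := ((tendsto_const_nhds : Filter.Tendsto (fun _ : ℝ => A + B) Filter.atTop (nhds (A + B))).sub h2 : Filter.Tendsto (fun v : ℝ => (A + B) - c₀ / v) Filter.atTop (nhds ((A+B) - 0)))
        simp only [hθeq, Real.rpow_zero, mul_one, sub_zero] at this ⊢
        exact this
      have hGlim : Filter.Tendsto G Filter.atTop (nhds (1/(A+B))) := by
        have hABpos : (0:ℝ) < A + B := by positivity
        rw [hG]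
        simpa [one_div] using hden.inv₀ hABpos.ne'
      have hval : Cstar p₁ / (1 + Cstar p₁ * β ^ (1 / (1 - p₁)) * z) = 1 / (A + B) := by
        have h1p₁ : 1 - p₁ = 1 / (1 - κ) := by rw [hp₁]; field_simp; ring
        have hbp : β ^ (1 / (1 - p₁)) = β ^ (1 - κ) := by
          rw [h1p₁, one_div_one_div]
        have hCp₁ : Cstar p₁ = 1 / A := by
          rw [hC p₁, hcase, hA, one_div_div]
        have hb0 : (0:ℝ) < β ^ (1 - κ) := Real.rpow_pos_of_pos hβ _
        have h1A : (0:ℝ) < 1/A := one_div_pos.mpr hApos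
        have hpos1 : (0:ℝ) < 1 + 1/A * β ^ (1 - κ) * z := by
          linarith [mul_pos (mul_pos h1A hb0) hz]
        have hpos2 : (0:ℝ) < A + z * β ^ (1 - κ) := by
          linarith [mul_pos hz hb0]
        rw [hbp, hCp₁, hB, div_eq_div_iff hpos1.ne' hpos2.ne']
        field_simp
      rw [hval]
      exact (hGlim.comp huTop).congr' heq.symm
    · -- θ > 1
      rw [if_neg (by exact fun h => absurd hcase (not_lt.mpr h.le)),
        if_neg (by intro h; rw [h] at hcase; exact lt_irrefl _ hcase)]
      have hθgt : 0 < θ - 1 := by rw [hθ1]; nlinarith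
      have h1 : Filter.Tendsto (fun v : ℝ => B * v ^ (θ - 1)) Filter.atTop Filter.atTop :=
        (tendsto_rpow_atTop hθgt).const_mul_atTop hBpos
      have h2 : Filter.Tendsto (fun v : ℝ => A - c₀ / v) Filter.atTop (nhds (A - 0)) := by
        exact (tendsto_const_nhds : Filter.Tendsto (fun _ : ℝ => A) Filter.atTop (nhds A)).sub (by simpa [div_eq_mul_inv] using tendsto_inv_atTop_zero.const_mul c₀ : Filter.Tendsto (fun v : ℝ => c₀ / v) Filter.atTop (nhds 0))
      have hden : Filter.Tendsto (fun v : ℝ => A + B * v ^ (θ - 1) - c₀ / v)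
          Filter.atTop Filter.atTop := by
        have := h1.atTop_add (h2 : Filter.Tendsto _ Filter.atTop (nhds (A - 0)))
        refine this.congr fun v => by ring
      have hGlim : Filter.Tendsto G Filter.atTop (nhds 0) := by
        have := hden.inv_tendsto_atTop
        simpa [hG, one_div, Pi.inv_def] using this
      exact (hGlim.comp huTop).congr' heq.symm
  exact hmain
end

section
/- Let d=1, μ>0, σ>0, σ_Z≥0, set α=μ²/(2σ²), η=σ_Zμ/σ (correlation γ=1). Fix β>0, ρ, μ_Z ∈ ℝ with ρ>μ_Z and μ_Z>η, p<1 with p≠0 and ρ(1−p)>αp, and let κ∈(0,1) be the positive root of ακ²+(ρ−η−α)κ+(μ_Z−ρ)=0. Set p₁ = −κ/(1−κ) and C*(q) = (ρ(1−q)−αq)/(1−q)². Then for every fixed z>0, the limit of θ*(x,z)/x as x→+∞ equals: μ/(σ²(1−p)) if p>p₁; μ/(σ²(1−p₁)) + (σ_Z/σ)·C*(p₁)β^{1/(1−p₁)}z/(1 + C*(p₁)β^{1/(1−p₁)}z) if p=p₁; and μ/(σ²(1−p₁)) + σ_Z/σ if p<p₁. -/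
open Real Filter

set_option maxHeartbeats 1000000

private lemma rpow_tendsto_zero_aux {c : ℝ} (hc : 0 < c) :
    Filter.Tendsto (fun t : ℝ => t ^ c) (nhdsWithin 0 (Set.Ioi 0)) (nhds 0) := by
  have h := (Real.continuousAt_rpow_const 0 c (Or.inr hc.le)).tendsto
  rw [Real.zero_rpow hc.ne'] at h
  exact h.mono_left nhdsWithin_le_nhds

/-- Asymptotics of the optimal portfolio-to-wealth ratio `θ*(x,z)/x` as `x → ∞`
in the one-dimensional market with correlation `γ = 1`. -/
theorem stmt_10 (μ σ σZ β ρ μZ p κ α η : ℝ)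
    (hμ : 0 < μ) (hσ : 0 < σ) (hσZ : 0 ≤ σZ)
    (hαdef : α = μ ^ 2 / (2 * σ ^ 2)) (hηdef : η = σZ * μ / σ)
    (hβ : 0 < β) (hρ : μZ < ρ) (hμη : η < μZ) (hp : p < 1) (hp0 : p ≠ 0)
    (hρp : α * p < ρ * (1 - p))
    (hκ : κ ∈ Set.Ioo (0 : ℝ) 1)
    (hκroot : α * κ ^ 2 + (ρ - η - α) * κ + (μZ - ρ) = 0)
    (p₁ : ℝ) (hp₁ : p₁ = -κ / (1 - κ))
    (Cstar : ℝ → ℝ) (hC : ∀ q : ℝ, Cstar q = (ρ * (1 - q) - α * q) / (1 - q) ^ 2)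
    (f : ℝ → ℝ → ℝ)
    (hf : ∀ x z : ℝ, 0 ≤ x → 0 ≤ z → f x z ∈ Set.Ioc (0 : ℝ) β ∧
      x = (1 - p) ^ 2 / (ρ * (1 - p) - α * p) *
            ((f x z) ^ (-(1 / (1 - p))) - β ^ (-(1 / (1 - p))))
          + z * (β ^ (-(κ - 1)) * (f x z) ^ (κ - 1) - 1))
    (z : ℝ) (hz : 0 < z) :
    Filter.Tendsto
      (fun x : ℝ =>
        (μ / σ ^ 2 * ((1 - p) / (ρ * (1 - p) - α * p) * (f x z) ^ (-(1 / (1 - p)))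
            + (1 - κ) * β ^ (-(κ - 1)) * z * (f x z) ^ (κ - 1))
          + σZ / σ * z * β ^ (-(κ - 1)) * (f x z) ^ (κ - 1)) / x)
      Filter.atTop
      (nhds (if p₁ < p then μ / (σ ^ 2 * (1 - p))
        else if p = p₁ then
          μ / (σ ^ 2 * (1 - p₁))
            + σZ / σ * (Cstar p₁ * β ^ (1 / (1 - p₁)) * z
                / (1 + Cstar p₁ * β ^ (1 / (1 - p₁)) * z))
        else μ / (σ ^ 2 * (1 - p₁)) + σZ / σ)) := by
  obtain ⟨hκ0, hκ1⟩ := hκ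
  have h1p : (0:ℝ) < 1 - p := by linarith
  have ha' : (0:ℝ) < ρ * (1 - p) - α * p := by linarith
  have h1κ : (0:ℝ) < 1 - κ := by linarith
  have hσ2 : (0:ℝ) < σ ^ 2 := by positivity
  have h1p₁ : 1 - p₁ = 1 / (1 - κ) := by rw [hp₁]; field_simp; ring
  have hβκ : (0:ℝ) < β ^ (-(κ - 1)) := Real.rpow_pos_of_pos hβ _
  have hβe : (0:ℝ) < β ^ (-(1 / (1 - p))) := Real.rpow_pos_of_pos hβ _
  have he1 : (0:ℝ) < 1 / (1 - p) := by positivity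
  have hA : (0:ℝ) < (1 - p) ^ 2 / (ρ * (1 - p) - α * p) := by positivity
  -- Step 1: f x z → 0⁺ as x → ∞
  have hflim : Tendsto (fun x => f x z) atTop (nhdsWithin 0 (Set.Ioi 0)) := by
    rw [tendsto_nhdsWithin_iff]
    constructor
    · rw [Metric.tendsto_atTop]
      intro ε hε
      set ε' := min (ε / 2) β with hε'def
      have hε'0 : 0 < ε' := lt_min (by linarith) hβ
      refine ⟨max 0 ((1 - p) ^ 2 / (ρ * (1 - p) - α * p) *
          (ε' ^ (-(1 / (1 - p))) - β ^ (-(1 / (1 - p))))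
          + z * (β ^ (-(κ - 1)) * ε' ^ (κ - 1) - 1) + 1), fun x hx => ?_⟩
      have hx0 : 0 ≤ x := le_trans (le_max_left _ _) hx
      have hxM : (1 - p) ^ 2 / (ρ * (1 - p) - α * p) *
          (ε' ^ (-(1 / (1 - p))) - β ^ (-(1 / (1 - p))))
          + z * (β ^ (-(κ - 1)) * ε' ^ (κ - 1) - 1) + 1 ≤ x :=
        le_trans (le_max_right _ _) hx
      have hpos := (hf x z hx0 hz.le).1.1
      have hfε : f x z < ε' := by
        by_contra hcon
        push_neg at hcon
        have h1 : f x z ^ (-(1 / (1 - p))) ≤ ε' ^ (-(1 / (1 - p))) :=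
          Real.rpow_le_rpow_of_nonpos hε'0 hcon (by linarith)
        have h2 : f x z ^ (κ - 1) ≤ ε' ^ (κ - 1) :=
          Real.rpow_le_rpow_of_nonpos hε'0 hcon (by linarith)
        have hxeq := (hf x z hx0 hz.le).2
        have k1 := mul_le_mul_of_nonneg_left h1 hA.le
        have k2 := mul_le_mul_of_nonneg_left h2
          (show (0:ℝ) ≤ z * β ^ (-(κ - 1)) by positivity)
        nlinarith [k1, k2, hxeq, hxM]
      rw [Real.dist_eq, abs_of_pos (by linarith : (0:ℝ) < f x z - 0)]
      have : ε' ≤ ε / 2 := min_le_left _ _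
      linarith
    · filter_upwards [eventually_ge_atTop (0:ℝ)] with x hx
      exact (hf x z hx hz.le).1.1
  -- the quotient as a function of y = f x z
  set G : ℝ → ℝ := fun t =>
    (μ / σ ^ 2 * ((1 - p) / (ρ * (1 - p) - α * p) * t ^ (-(1 / (1 - p)))
        + (1 - κ) * β ^ (-(κ - 1)) * z * t ^ (κ - 1))
      + σZ / σ * z * β ^ (-(κ - 1)) * t ^ (κ - 1)) /
    ((1 - p) ^ 2 / (ρ * (1 - p) - α * p) *
        (t ^ (-(1 / (1 - p))) - β ^ (-(1 / (1 - p))))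
      + z * (β ^ (-(κ - 1)) * t ^ (κ - 1) - 1)) with hG
  suffices hGlim : Tendsto G (nhdsWithin 0 (Set.Ioi 0))
      (nhds (if p₁ < p then μ / (σ ^ 2 * (1 - p))
        else if p = p₁ then
          μ / (σ ^ 2 * (1 - p₁))
            + σZ / σ * (Cstar p₁ * β ^ (1 / (1 - p₁)) * z
                / (1 + Cstar p₁ * β ^ (1 / (1 - p₁)) * z))
        else μ / (σ ^ 2 * (1 - p₁)) + σZ / σ)) by
    refine (hGlim.comp hflim).congr' ?_
    filter_upwards [eventually_ge_atTop (0:ℝ)] with x hx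
    simp only [Function.comp_apply, hG]
    congr 1
    exact ((hf x z hx hz.le).2).symm
  rcases lt_trichotomy p₁ p with hcase | hcase | hcase
  · -- p₁ < p : exponent 1/(1-p) dominates
    rw [if_pos hcase]
    have hlt : 1 - p < 1 / (1 - κ) := by rw [← h1p₁]; linarith
    have hk1 : (1 - p) * (1 - κ) < 1 := (lt_div_iff₀ h1κ).mp hlt
    have he3 : (0:ℝ) < 1 / (1 - p) - (1 - κ) := by
      have : 1 - κ < 1 / (1 - p) := (lt_div_iff₀ h1p).mpr (by linear_combination hk1)
      linarith
    set e3 := 1 / (1 - p) - (1 - κ) with he3def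
    set h₁ : ℝ → ℝ := fun t =>
      μ / σ ^ 2 * ((1 - p) / (ρ * (1 - p) - α * p)
          + (1 - κ) * β ^ (-(κ - 1)) * z * t ^ e3)
        + σZ / σ * z * β ^ (-(κ - 1)) * t ^ e3 with hh₁
    set h₂ : ℝ → ℝ := fun t =>
      (1 - p) ^ 2 / (ρ * (1 - p) - α * p) *
          (1 - β ^ (-(1 / (1 - p))) * t ^ (1 / (1 - p)))
        + z * (β ^ (-(κ - 1)) * t ^ e3 - t ^ (1 / (1 - p))) with hh₂
    have hpt : ∀ t ∈ Set.Ioi (0:ℝ), h₁ t / h₂ t = G t := by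
      intro t ht
      have ht' : (0:ℝ) < t := ht
      have hT : (0:ℝ) < t ^ (1 / (1 - p)) := Real.rpow_pos_of_pos ht' _
      have hm1 : t ^ (-(1 / (1 - p))) * t ^ (1 / (1 - p)) = 1 := by
        rw [← Real.rpow_add ht']; norm_num
      have hm2 : t ^ (κ - 1) * t ^ (1 / (1 - p)) = t ^ e3 := by
        rw [← Real.rpow_add ht', he3def]
        congr 1
        ring
      rw [hG, hh₁, hh₂]
      simp only
      have hN : μ / σ ^ 2 * ((1 - p) / (ρ * (1 - p) - α * p)
            + (1 - κ) * β ^ (-(κ - 1)) * z * t ^ e3)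
          + σZ / σ * z * β ^ (-(κ - 1)) * t ^ e3
          = (μ / σ ^ 2 * ((1 - p) / (ρ * (1 - p) - α * p) * t ^ (-(1 / (1 - p)))
            + (1 - κ) * β ^ (-(κ - 1)) * z * t ^ (κ - 1))
          + σZ / σ * z * β ^ (-(κ - 1)) * t ^ (κ - 1)) * t ^ (1 / (1 - p)) := by
        linear_combination (μ / σ ^ 2 * ((1 - p) / (ρ * (1 - p) - α * p))) * hm1.symm
          + (μ / σ ^ 2 * ((1 - κ) * β ^ (-(κ - 1)) * z)
              + σZ / σ * z * β ^ (-(κ - 1))) * hm2.symm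
      have hD : (1 - p) ^ 2 / (ρ * (1 - p) - α * p) *
            (1 - β ^ (-(1 / (1 - p))) * t ^ (1 / (1 - p)))
          + z * (β ^ (-(κ - 1)) * t ^ e3 - t ^ (1 / (1 - p)))
          = ((1 - p) ^ 2 / (ρ * (1 - p) - α * p) *
            (t ^ (-(1 / (1 - p))) - β ^ (-(1 / (1 - p))))
          + z * (β ^ (-(κ - 1)) * t ^ (κ - 1) - 1)) * t ^ (1 / (1 - p)) := by
        linear_combination ((1 - p) ^ 2 / (ρ * (1 - p) - α * p)) * hm1.symm
          + (z * β ^ (-(κ - 1))) * hm2.symm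
      rw [hN, hD, mul_div_mul_right _ _ hT.ne']
    have l3 := rpow_tendsto_zero_aux he3
    have lE := rpow_tendsto_zero_aux he1
    have hlim1 : Tendsto h₁ (nhdsWithin 0 (Set.Ioi 0))
        (nhds (μ / σ ^ 2 * ((1 - p) / (ρ * (1 - p) - α * p)))) := by
      rw [hh₁]
      have := (Continuous.tendsto (show Continuous (fun u : ℝ =>
        μ / σ ^ 2 * ((1 - p) / (ρ * (1 - p) - α * p)
          + (1 - κ) * β ^ (-(κ - 1)) * z * u)
        + σZ / σ * z * β ^ (-(κ - 1)) * u) by fun_prop) 0).comp l3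
      simpa [Function.comp_def] using this
    have hlim2 : Tendsto h₂ (nhdsWithin 0 (Set.Ioi 0))
        (nhds ((1 - p) ^ 2 / (ρ * (1 - p) - α * p))) := by
      rw [hh₂]
      have := (Continuous.tendsto (show Continuous (fun q : ℝ × ℝ =>
        (1 - p) ^ 2 / (ρ * (1 - p) - α * p) *
          (1 - β ^ (-(1 / (1 - p))) * q.2)
        + z * (β ^ (-(κ - 1)) * q.1 - q.2)) by fun_prop) (0, 0)).comp
        (l3.prodMk_nhds lE)
      simpa [Function.comp_def] using this
    have hval : μ / (σ ^ 2 * (1 - p)) =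
        (μ / σ ^ 2 * ((1 - p) / (ρ * (1 - p) - α * p))) /
          ((1 - p) ^ 2 / (ρ * (1 - p) - α * p)) := by
      rw [eq_div_iff hA.ne']
      field_simp
    rw [hval]
    exact Tendsto.congr' (eventually_nhdsWithin_of_forall hpt)
      (hlim1.div hlim2 hA.ne')
  · -- p = p₁ : equal exponents
    rw [if_neg (by rw [hcase]; exact lt_irrefl p), if_pos hcase.symm, hcase]
    have h1pk : 1 - p = 1 / (1 - κ) := by rw [← hcase]; exact h1p₁
    have hpe : 1 / (1 - p) = 1 - κ := by rw [h1pk, one_div_one_div]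
    have hrel : (1 - p) * (1 - κ) = 1 := by
      rw [h1pk]; field_simp
    set h₁ : ℝ → ℝ := fun _ =>
      μ / σ ^ 2 * ((1 - p) / (ρ * (1 - p) - α * p)
          + (1 - κ) * β ^ (-(κ - 1)) * z)
        + σZ / σ * z * β ^ (-(κ - 1)) with hh₁
    set h₂ : ℝ → ℝ := fun t =>
      (1 - p) ^ 2 / (ρ * (1 - p) - α * p) *
          (1 - β ^ (-(1 / (1 - p))) * t ^ (1 - κ))
        + z * (β ^ (-(κ - 1)) - t ^ (1 - κ)) with hh₂
    have hpt : ∀ t ∈ Set.Ioi (0:ℝ), h₁ t / h₂ t = G t := by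
      intro t ht
      have ht' : (0:ℝ) < t := ht
      have hT : (0:ℝ) < t ^ (1 - κ) := Real.rpow_pos_of_pos ht' _
      have hm1 : t ^ (-(1 / (1 - p))) * t ^ (1 - κ) = 1 := by
        rw [← Real.rpow_add ht', hpe]
        norm_num
      have hm2 : t ^ (κ - 1) * t ^ (1 - κ) = 1 := by
        rw [← Real.rpow_add ht']; norm_num
      rw [hG, hh₁, hh₂]
      simp only
      have hN : μ / σ ^ 2 * ((1 - p) / (ρ * (1 - p) - α * p)
            + (1 - κ) * β ^ (-(κ - 1)) * z)
          + σZ / σ * z * β ^ (-(κ - 1))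
          = (μ / σ ^ 2 * ((1 - p) / (ρ * (1 - p) - α * p) * t ^ (-(1 / (1 - p)))
            + (1 - κ) * β ^ (-(κ - 1)) * z * t ^ (κ - 1))
          + σZ / σ * z * β ^ (-(κ - 1)) * t ^ (κ - 1)) * t ^ (1 - κ) := by
        linear_combination (μ / σ ^ 2 * ((1 - p) / (ρ * (1 - p) - α * p))) * hm1.symm
          + (μ / σ ^ 2 * ((1 - κ) * β ^ (-(κ - 1)) * z)
              + σZ / σ * z * β ^ (-(κ - 1))) * hm2.symm
      have hD : (1 - p) ^ 2 / (ρ * (1 - p) - α * p) *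
            (1 - β ^ (-(1 / (1 - p))) * t ^ (1 - κ))
          + z * (β ^ (-(κ - 1)) - t ^ (1 - κ))
          = ((1 - p) ^ 2 / (ρ * (1 - p) - α * p) *
            (t ^ (-(1 / (1 - p))) - β ^ (-(1 / (1 - p))))
          + z * (β ^ (-(κ - 1)) * t ^ (κ - 1) - 1)) * t ^ (1 - κ) := by
        linear_combination ((1 - p) ^ 2 / (ρ * (1 - p) - α * p)) * hm1.symm
          + (z * β ^ (-(κ - 1))) * hm2.symm
      rw [hN, hD, mul_div_mul_right _ _ hT.ne']
    have lκ := rpow_tendsto_zero_aux h1κ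
    have hlim1 : Tendsto h₁ (nhdsWithin 0 (Set.Ioi 0))
        (nhds (μ / σ ^ 2 * ((1 - p) / (ρ * (1 - p) - α * p)
          + (1 - κ) * β ^ (-(κ - 1)) * z)
        + σZ / σ * z * β ^ (-(κ - 1)))) := tendsto_const_nhds
    have hlim2 : Tendsto h₂ (nhdsWithin 0 (Set.Ioi 0))
        (nhds ((1 - p) ^ 2 / (ρ * (1 - p) - α * p) + z * β ^ (-(κ - 1)))) := by
      rw [hh₂]
      have := (Continuous.tendsto (show Continuous (fun u : ℝ =>
        (1 - p) ^ 2 / (ρ * (1 - p) - α * p) *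
          (1 - β ^ (-(1 / (1 - p))) * u)
        + z * (β ^ (-(κ - 1)) - u)) by fun_prop) 0).comp lκ
      simpa [Function.comp_def] using this
    have hbb : β ^ (-(κ - 1)) = β ^ (1 - κ) := by
      rw [show -(κ - 1) = 1 - κ by ring]
    have hCval : Cstar p = (ρ * (1 - p) - α * p) / (1 - p) ^ 2 := hC p
    have hden : (0:ℝ) < 1 + Cstar p * β ^ (1 - κ) * z := by
      rw [hCval]
      have : (0:ℝ) < β ^ ((1:ℝ) - κ) := Real.rpow_pos_of_pos hβ _
      positivity
    have hval : μ / (σ ^ 2 * (1 - p))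
          + σZ / σ * (Cstar p * β ^ (1 / (1 - p)) * z
              / (1 + Cstar p * β ^ (1 / (1 - p)) * z)) =
        (μ / σ ^ 2 * ((1 - p) / (ρ * (1 - p) - α * p)
            + (1 - κ) * β ^ (-(κ - 1)) * z)
          + σZ / σ * z * β ^ (-(κ - 1))) /
        ((1 - p) ^ 2 / (ρ * (1 - p) - α * p) + z * β ^ (-(κ - 1))) := by
      rw [hbb, hCval, ← hpe]
      have hB : (0:ℝ) < β ^ (1 / (1 - p)) := Real.rpow_pos_of_pos hβ _
      have hden2 : (0:ℝ) <
          (1 - p) ^ 2 / (ρ * (1 - p) - α * p) + z * β ^ (1 / (1 - p)) := by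
        positivity
      have hden' : (0:ℝ) <
          1 + (ρ * (1 - p) - α * p) / (1 - p) ^ 2 * β ^ (1 / (1 - p)) * z := by
        positivity
      rw [eq_div_iff hden2.ne']
      generalize β ^ (1 / (1 - p)) = B at hB hden2 hden' ⊢
      have hden'' : (0:ℝ) < (1 - p) ^ 2 + (ρ * (1 - p) - α * p) * B * z := by positivity
      generalize ρ * (1 - p) - α * p = D at ha' hden2 hden' hden'' ⊢
      generalize 1 - p = q at h1p hden2 hden' hden'' ⊢
      field_simp
    rw [hval]
    exact Tendsto.congr' (eventually_nhdsWithin_of_forall hpt)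
      (hlim1.div hlim2 (by positivity))
  · -- p < p₁ : exponent 1-κ dominates
    rw [if_neg (not_lt.mpr hcase.le),
      if_neg (fun h => absurd hcase (by rw [h]; exact lt_irrefl p₁))]
    have hlt : 1 / (1 - κ) < 1 - p := by rw [← h1p₁]; linarith
    have hk1 : 1 < (1 - p) * (1 - κ) := (div_lt_iff₀ h1κ).mp hlt
    have he4 : (0:ℝ) < (1 - κ) - 1 / (1 - p) := by
      have : 1 / (1 - p) < 1 - κ := (div_lt_iff₀ h1p).mpr (by linear_combination hk1)
      linarith
    set e4 := (1 - κ) - 1 / (1 - p) with he4def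
    set h₁ : ℝ → ℝ := fun t =>
      μ / σ ^ 2 * ((1 - p) / (ρ * (1 - p) - α * p) * t ^ e4
          + (1 - κ) * β ^ (-(κ - 1)) * z)
        + σZ / σ * z * β ^ (-(κ - 1)) with hh₁
    set h₂ : ℝ → ℝ := fun t =>
      (1 - p) ^ 2 / (ρ * (1 - p) - α * p) *
          (t ^ e4 - β ^ (-(1 / (1 - p))) * t ^ (1 - κ))
        + z * (β ^ (-(κ - 1)) - t ^ (1 - κ)) with hh₂
    have hpt : ∀ t ∈ Set.Ioi (0:ℝ), h₁ t / h₂ t = G t := by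
      intro t ht
      have ht' : (0:ℝ) < t := ht
      have hT : (0:ℝ) < t ^ (1 - κ) := Real.rpow_pos_of_pos ht' _
      have hm1 : t ^ (-(1 / (1 - p))) * t ^ (1 - κ) = t ^ e4 := by
        rw [← Real.rpow_add ht', he4def]
        congr 1
        ring
      have hm2 : t ^ (κ - 1) * t ^ (1 - κ) = 1 := by
        rw [← Real.rpow_add ht']; norm_num
      rw [hG, hh₁, hh₂]
      simp only
      have hN : μ / σ ^ 2 * ((1 - p) / (ρ * (1 - p) - α * p) * t ^ e4
            + (1 - κ) * β ^ (-(κ - 1)) * z)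
          + σZ / σ * z * β ^ (-(κ - 1))
          = (μ / σ ^ 2 * ((1 - p) / (ρ * (1 - p) - α * p) * t ^ (-(1 / (1 - p)))
            + (1 - κ) * β ^ (-(κ - 1)) * z * t ^ (κ - 1))
          + σZ / σ * z * β ^ (-(κ - 1)) * t ^ (κ - 1)) * t ^ (1 - κ) := by
        linear_combination (μ / σ ^ 2 * ((1 - p) / (ρ * (1 - p) - α * p))) * hm1.symm
          + (μ / σ ^ 2 * ((1 - κ) * β ^ (-(κ - 1)) * z)
              + σZ / σ * z * β ^ (-(κ - 1))) * hm2.symm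
      have hD : (1 - p) ^ 2 / (ρ * (1 - p) - α * p) *
            (t ^ e4 - β ^ (-(1 / (1 - p))) * t ^ (1 - κ))
          + z * (β ^ (-(κ - 1)) - t ^ (1 - κ))
          = ((1 - p) ^ 2 / (ρ * (1 - p) - α * p) *
            (t ^ (-(1 / (1 - p))) - β ^ (-(1 / (1 - p))))
          + z * (β ^ (-(κ - 1)) * t ^ (κ - 1) - 1)) * t ^ (1 - κ) := by
        linear_combination ((1 - p) ^ 2 / (ρ * (1 - p) - α * p)) * hm1.symm
          + (z * β ^ (-(κ - 1))) * hm2.symm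
      rw [hN, hD, mul_div_mul_right _ _ hT.ne']
    have l4 := rpow_tendsto_zero_aux he4
    have lκ := rpow_tendsto_zero_aux h1κ
    have hlim1 : Tendsto h₁ (nhdsWithin 0 (Set.Ioi 0))
        (nhds (μ / σ ^ 2 * ((1 - κ) * β ^ (-(κ - 1)) * z)
          + σZ / σ * z * β ^ (-(κ - 1)))) := by
      rw [hh₁]
      have := (Continuous.tendsto (show Continuous (fun u : ℝ =>
        μ / σ ^ 2 * ((1 - p) / (ρ * (1 - p) - α * p) * u
          + (1 - κ) * β ^ (-(κ - 1)) * z)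
        + σZ / σ * z * β ^ (-(κ - 1))) by fun_prop) 0).comp l4
      simpa [Function.comp_def] using this
    have hlim2 : Tendsto h₂ (nhdsWithin 0 (Set.Ioi 0))
        (nhds (z * β ^ (-(κ - 1)))) := by
      rw [hh₂]
      have := (Continuous.tendsto (show Continuous (fun q : ℝ × ℝ =>
        (1 - p) ^ 2 / (ρ * (1 - p) - α * p) *
          (q.1 - β ^ (-(1 / (1 - p))) * q.2)
        + z * (β ^ (-(κ - 1)) - q.2)) by fun_prop) (0, 0)).comp
        (l4.prodMk_nhds lκ)
      simpa [Function.comp_def] using this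
    have hval : μ / (σ ^ 2 * (1 - p₁)) + σZ / σ =
        (μ / σ ^ 2 * ((1 - κ) * β ^ (-(κ - 1)) * z)
          + σZ / σ * z * β ^ (-(κ - 1))) / (z * β ^ (-(κ - 1))) := by
      rw [show 1 - p₁ = 1 / (1 - κ) from h1p₁, eq_div_iff (by positivity)]
      field_simp
    rw [hval]
    exact Tendsto.congr' (eventually_nhdsWithin_of_forall hpt)
      (hlim1.div hlim2 (by positivity))
end

section
/- Fix α>0, β>0, ρ, μ_Z, η ∈ ℝ with ρ>μ_Z and μ_Z>η, p<1 with p≠0 and ρ(1−p)>αp, and let κ∈(0,1) be the positive root of ακ²+(ρ−η−α)κ+(μ_Z−ρ)=0. Then for every fixed z>0, the map x ↦ c*(x,z) is strictly increasing on [0,∞); indeed its derivative equals f(x,z)^{(2−p)/(p−1)} / ((1−p)·ĥv_{yy}(f(x,z),z)) > 0, where ĥv_{yy}(y,z) = (1−p)/(ρ(1−p)−αp)·y^{−1/(1−p)−1} + z(1−κ)β^{−(κ−1)}y^{κ−2}. -/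
open Real Filter Topology Set

/-- Inverse-function derivative lemma: if `u` maps `[0,∞)` into `(0,β]` and is a right
inverse of a strictly antitone `G`, then `H ∘ u` has one-sided derivative `H' / G'`. -/
lemma aux_inverse_deriv {β : ℝ} (G u : ℝ → ℝ)
    (hG : StrictAntiOn G (Set.Ioi 0))
    (hu : ∀ t, 0 ≤ t → 0 < u t ∧ u t ≤ β ∧ G (u t) = t)
    {x : ℝ} (hx : 0 ≤ x)
    {G' : ℝ} (hGd : HasDerivAt G G' (u x)) (hG0 : G' ≠ 0)
    {H : ℝ → ℝ} {H' : ℝ} (hHd : HasDerivAt H H' (u x)) :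
    HasDerivWithinAt (fun t => H (u t)) (H' / G') (Set.Ici 0) x := by
  have huinj : ∀ t, 0 ≤ t → t ≠ x → u t ≠ u x := by
    intro t ht hne he
    exact hne (by rw [← (hu t ht).2.2, he, (hu x hx).2.2])
  -- continuity of `u` at `x` within `Ici 0`
  have hcont : Tendsto u (𝓝[Set.Ici 0] x) (𝓝 (u x)) := by
    rw [tendsto_order]
    constructor
    · intro b hb
      rcases le_or_gt b 0 with hb0 | hb0
      · filter_upwards [self_mem_nhdsWithin] with t ht
        exact lt_of_le_of_lt hb0 (hu t ht).1
      · have hxb : x < G b := by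
          have := hG (Set.mem_Ioi.2 hb0) (Set.mem_Ioi.2 (hu x hx).1) hb
          rwa [(hu x hx).2.2] at this
        filter_upwards [mem_nhdsWithin_of_mem_nhds (Iio_mem_nhds hxb),
          self_mem_nhdsWithin] with t ht ht0
        by_contra hle
        push_neg at hle
        have h2 : G b ≤ G (u t) :=
          hG.antitoneOn (Set.mem_Ioi.2 (hu t ht0).1) (Set.mem_Ioi.2 hb0) hle
        rw [(hu t ht0).2.2] at h2
        exact absurd ht (not_lt.2 h2)
    · intro b hb
      rcases le_or_gt b β with hbβ | hbβ
      · have hb0 : 0 < b := lt_trans (hu x hx).1 hb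
        have hxb : G b < x := by
          have := hG (Set.mem_Ioi.2 (hu x hx).1) (Set.mem_Ioi.2 hb0) hb
          rwa [(hu x hx).2.2] at this
        filter_upwards [mem_nhdsWithin_of_mem_nhds (Ioi_mem_nhds hxb),
          self_mem_nhdsWithin] with t ht ht0
        by_contra hle
        push_neg at hle
        have h2 : G (u t) ≤ G b :=
          hG.antitoneOn (Set.mem_Ioi.2 hb0) (Set.mem_Ioi.2 (hu t ht0).1) hle
        rw [(hu t ht0).2.2] at h2
        exact absurd ht (not_lt.2 h2)
      · filter_upwards [self_mem_nhdsWithin] with t ht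
        exact lt_of_le_of_lt (hu t ht).2.1 hbβ
  have htu : Tendsto u (𝓝[Set.Ici 0 \ {x}] x) (𝓝[≠] (u x)) := by
    rw [tendsto_nhdsWithin_iff]
    refine ⟨hcont.mono_left (nhdsWithin_mono _ Set.diff_subset), ?_⟩
    filter_upwards [self_mem_nhdsWithin] with t ht
    simp only [Set.mem_compl_iff, Set.mem_singleton_iff]
    exact huinj t ht.1 (by simpa using ht.2)
  have hsH := hasDerivAt_iff_tendsto_slope.1 hHd
  have hsG := hasDerivAt_iff_tendsto_slope.1 hGd
  have hlim : Tendsto (fun t => slope H (u x) (u t) / slope G (u x) (u t))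
      (𝓝[Set.Ici 0 \ {x}] x) (𝓝 (H' / G')) :=
    (hsH.comp htu).div (hsG.comp htu) hG0
  rw [hasDerivWithinAt_iff_tendsto_slope]
  refine hlim.congr' ?_
  filter_upwards [self_mem_nhdsWithin] with t ht
  have ht0 : 0 ≤ t := ht.1
  have htx : t ≠ x := by simpa using ht.2
  have hne : u t - u x ≠ 0 := sub_ne_zero.2 (huinj t ht0 htx)
  show slope H (u x) (u t) / slope G (u x) (u t) = slope (fun t => H (u t)) x t
  rw [slope_def_field, slope_def_field, slope_def_field, (hu t ht0).2.2, (hu x hx).2.2,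
    div_div_eq_mul_div, div_mul_cancel₀ _ hne]

/-- The optimal feedback consumption `x ↦ c*(x,z) = f(x,z)^{1/(p-1)}`
is strictly increasing on `[0,∞)`, with strictly positive derivative
`f(x,z)^{(2-p)/(p-1)} / ((1-p)·ĥv_yy(f(x,z),z))`. -/
theorem stmt_11 (α β ρ μZ η p κ : ℝ) (hα : 0 < α) (hβ : 0 < β)
    (hρ : μZ < ρ) (hμη : η < μZ) (hp : p < 1) (hp0 : p ≠ 0)
    (hρp : α * p < ρ * (1 - p))
    (hκ : κ ∈ Set.Ioo (0 : ℝ) 1)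
    (hκroot : α * κ ^ 2 + (ρ - η - α) * κ + (μZ - ρ) = 0)
    (f : ℝ → ℝ → ℝ)
    (hf : ∀ x z : ℝ, 0 ≤ x → 0 ≤ z → f x z ∈ Set.Ioc (0 : ℝ) β ∧
      x = (1 - p) ^ 2 / (ρ * (1 - p) - α * p) *
            ((f x z) ^ (-(1 / (1 - p))) - β ^ (-(1 / (1 - p))))
          + z * (β ^ (-(κ - 1)) * (f x z) ^ (κ - 1) - 1))
    (z : ℝ) (hz : 0 < z) :
    StrictMonoOn (fun x : ℝ => (f x z) ^ (1 / (p - 1))) (Set.Ici 0) ∧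
    ∀ x : ℝ, 0 ≤ x →
      HasDerivWithinAt (fun x' : ℝ => (f x' z) ^ (1 / (p - 1)))
        ((f x z) ^ ((2 - p) / (p - 1)) /
          ((1 - p) * ((1 - p) / (ρ * (1 - p) - α * p) * (f x z) ^ (-(1 / (1 - p)) - 1)
            + z * (1 - κ) * β ^ (-(κ - 1)) * (f x z) ^ (κ - 2))))
        (Set.Ici 0) x ∧
      0 < (f x z) ^ ((2 - p) / (p - 1)) /
          ((1 - p) * ((1 - p) / (ρ * (1 - p) - α * p) * (f x z) ^ (-(1 / (1 - p)) - 1)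
            + z * (1 - κ) * β ^ (-(κ - 1)) * (f x z) ^ (κ - 2))) := by
  have hp1 : (0:ℝ) < 1 - p := by linarith
  have hD : (0:ℝ) < ρ * (1 - p) - α * p := by linarith
  have hκ1 : (0:ℝ) < 1 - κ := by linarith [hκ.2]
  have hκ0 : (0:ℝ) < κ := hκ.1
  have heneg : -(1 / (1 - p)) < 0 := by
    have : (0:ℝ) < 1 / (1 - p) := by positivity
    linarith
  have hqneg : κ - 1 < 0 := by linarith
  have hpe : (1:ℝ) / (p - 1) < 0 := div_neg_of_pos_of_neg one_pos (by linarith)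
  set G : ℝ → ℝ := fun y => (1 - p) ^ 2 / (ρ * (1 - p) - α * p) *
      (y ^ (-(1 / (1 - p))) - β ^ (-(1 / (1 - p))))
      + z * (β ^ (-(κ - 1)) * y ^ (κ - 1) - 1) with hG_def
  have hu : ∀ t, 0 ≤ t → 0 < f t z ∧ f t z ≤ β ∧ G (f t z) = t := by
    intro t ht
    obtain ⟨hmem, heq⟩ := hf t z ht hz.le
    exact ⟨hmem.1, hmem.2, heq.symm⟩
  have hA : (0:ℝ) < (1 - p) ^ 2 / (ρ * (1 - p) - α * p) := by positivity
  have hB : (0:ℝ) < z * β ^ (-(κ - 1)) := by positivity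
  have hGanti : StrictAntiOn G (Set.Ioi 0) := by
    intro y1 h1 y2 h2 h12
    have t1 : y2 ^ (-(1 / (1 - p))) < y1 ^ (-(1 / (1 - p))) :=
      Real.rpow_lt_rpow_of_neg h1 h12 heneg
    have t2 : y2 ^ (κ - 1) < y1 ^ (κ - 1) :=
      Real.rpow_lt_rpow_of_neg h1 h12 hqneg
    simp only [hG_def]
    nlinarith [mul_lt_mul_of_pos_left t1 hA, mul_lt_mul_of_pos_left t2 hB]
  constructor
  · intro x1 hx1 x2 hx2 h12
    have hy : f x2 z < f x1 z := by
      by_contra h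
      push_neg at h
      have h2 := hGanti.antitoneOn (Set.mem_Ioi.2 (hu x1 hx1).1)
        (Set.mem_Ioi.2 (hu x2 hx2).1) h
      rw [(hu x1 hx1).2.2, (hu x2 hx2).2.2] at h2
      exact absurd h12 (not_lt.2 h2)
    exact Real.rpow_lt_rpow_of_neg (hu x2 hx2).1 hy hpe
  · intro x hx
    have hy0 : 0 < f x z := (hu x hx).1
    have hyne : f x z ≠ 0 := hy0.ne'
    -- derivative of G at f x z
    have hd1 : HasDerivAt (fun t : ℝ => t ^ (-(1 / (1 - p))))
        (-(1 / (1 - p)) * (f x z) ^ (-(1 / (1 - p)) - 1)) (f x z) :=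
      Real.hasDerivAt_rpow_const (Or.inl hyne)
    have hd2 : HasDerivAt (fun t : ℝ => t ^ (κ - 1))
        ((κ - 1) * (f x z) ^ (κ - 1 - 1)) (f x z) :=
      Real.hasDerivAt_rpow_const (Or.inl hyne)
    have hGd : HasDerivAt G
        ((1 - p) ^ 2 / (ρ * (1 - p) - α * p) *
            (-(1 / (1 - p)) * (f x z) ^ (-(1 / (1 - p)) - 1))
          + z * (β ^ (-(κ - 1)) * ((κ - 1) * (f x z) ^ (κ - 1 - 1)))) (f x z) := by
      rw [hG_def]
      exact ((hd1.sub_const _).const_mul _).add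
        (((hd2.const_mul _).sub_const _).const_mul _)
    have hHd : HasDerivAt (fun t : ℝ => t ^ (1 / (p - 1)))
        ((1 / (p - 1)) * (f x z) ^ (1 / (p - 1) - 1)) (f x z) :=
      Real.hasDerivAt_rpow_const (Or.inl hyne)
    -- positivity of the denominator
    have hh1 : 0 < (1 - p) / (ρ * (1 - p) - α * p) * (f x z) ^ (-(1 / (1 - p)) - 1) :=
      mul_pos (div_pos hp1 hD) (Real.rpow_pos_of_pos hy0 _)
    have hh2 : 0 < z * (1 - κ) * β ^ (-(κ - 1)) * (f x z) ^ (κ - 2) :=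
      mul_pos (mul_pos (mul_pos hz hκ1) (Real.rpow_pos_of_pos hβ _))
        (Real.rpow_pos_of_pos hy0 _)
    have hhpos : 0 < (1 - p) / (ρ * (1 - p) - α * p) * (f x z) ^ (-(1 / (1 - p)) - 1)
        + z * (1 - κ) * β ^ (-(κ - 1)) * (f x z) ^ (κ - 2) := by linarith
    -- exponent identities
    have hex1 : -(1 / (1 - p)) - 1 = 1 / (p - 1) - 1 := by
      have : -(1 / (1 - p)) = 1 / (p - 1) := by
        rw [one_div, one_div, ← inv_neg, neg_sub]
      rw [this]
    have hex2 : κ - 2 = κ - 1 - 1 := by ring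
    have hpne : p - 1 ≠ 0 := sub_ne_zero.2 (ne_of_lt hp)
    have hex3 : (2 - p) / (p - 1) = 1 / (p - 1) - 1 := by
      field_simp
      ring
    -- the derivative of G is minus the denominator term
    have hGval : (1 - p) ^ 2 / (ρ * (1 - p) - α * p) *
            (-(1 / (1 - p)) * (f x z) ^ (-(1 / (1 - p)) - 1))
          + z * (β ^ (-(κ - 1)) * ((κ - 1) * (f x z) ^ (κ - 1 - 1)))
        = -((1 - p) / (ρ * (1 - p) - α * p) * (f x z) ^ (-(1 / (1 - p)) - 1)
          + z * (1 - κ) * β ^ (-(κ - 1)) * (f x z) ^ (κ - 2)) := by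
      rw [← hex2]
      field_simp
      ring
    have hG0 : ((1 - p) ^ 2 / (ρ * (1 - p) - α * p) *
            (-(1 / (1 - p)) * (f x z) ^ (-(1 / (1 - p)) - 1))
          + z * (β ^ (-(κ - 1)) * ((κ - 1) * (f x z) ^ (κ - 1 - 1)))) ≠ 0 := by
      rw [hGval]
      exact neg_ne_zero.2 hhpos.ne'
    have hder := aux_inverse_deriv G (fun t => f t z) hGanti hu hx hGd hG0 hHd
    have hval_eq : (1 / (p - 1)) * (f x z) ^ (1 / (p - 1) - 1) /
        ((1 - p) ^ 2 / (ρ * (1 - p) - α * p) *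
            (-(1 / (1 - p)) * (f x z) ^ (-(1 / (1 - p)) - 1))
          + z * (β ^ (-(κ - 1)) * ((κ - 1) * (f x z) ^ (κ - 1 - 1))))
        = (f x z) ^ ((2 - p) / (p - 1)) /
          ((1 - p) * ((1 - p) / (ρ * (1 - p) - α * p) * (f x z) ^ (-(1 / (1 - p)) - 1)
            + z * (1 - κ) * β ^ (-(κ - 1)) * (f x z) ^ (κ - 2))) := by
      have hc : (1:ℝ) / (p - 1) = -(1 / (1 - p)) := by
        rw [one_div, one_div, ← inv_neg, neg_sub]
      have hc2 : (1:ℝ) / (p - 1) * (f x z) ^ (1 / (p - 1) - 1)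
          = -(1 / (1 - p) * (f x z) ^ (1 / (p - 1) - 1)) := by
        rw [hc, neg_mul]
      rw [hGval, hex1, hex3, hc2, neg_div_neg_eq, one_div_mul_eq_div, div_div]
    rw [hval_eq] at hder
    exact ⟨hder, div_pos (Real.rpow_pos_of_pos hy0 _) (mul_pos hp1 hhpos)⟩
end

section
/- Fix α>0, β>0, ρ, μ_Z, η ∈ ℝ with ρ>μ_Z and μ_Z>η, p<1 with p≠0 and ρ(1−p)>αp, and let κ∈(0,1) be the positive root of ακ²+(ρ−η−α)κ+(μ_Z−ρ)=0. Set p₁=−κ/(1−κ). Then for every fixed z>0: if p∈(p₁,1), the map x ↦ c*(x,z) is strictly convex on [0,∞); if p∈(−∞,p₁), it is strictly concave; and if p=p₁, it is affine in x. -/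
open Real

/-- Inverse of a strictly increasing, strictly concave function is strictly convex. -/
lemma inverse_strict_convex (g c : ℝ → ℝ)
    (hmono : StrictMonoOn g (Set.Ici 0))
    (hconc : ∀ u ∈ Set.Ici (0:ℝ), ∀ v ∈ Set.Ici (0:ℝ), u ≠ v → ∀ a b : ℝ,
      0 < a → 0 < b → a + b = 1 → a * g u + b * g v < g (a*u + b*v))
    (hcpos : ∀ x ∈ Set.Ici (0:ℝ), c x ∈ Set.Ici (0:ℝ))
    (hgc : ∀ x ∈ Set.Ici (0:ℝ), g (c x) = x) :
    StrictConvexOn ℝ (Set.Ici 0) c := by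
  refine ⟨convex_Ici 0, ?_⟩
  intro x hx y hy hxy a b ha hb hab
  simp only [smul_eq_mul]
  have hx' : (0:ℝ) ≤ x := hx
  have hy' : (0:ℝ) ≤ y := hy
  have hw : a*x + b*y ∈ Set.Ici (0:ℝ) :=
    add_nonneg (mul_nonneg ha.le hx') (mul_nonneg hb.le hy')
  have hu := hcpos x hx
  have hv := hcpos y hy
  have huv : c x ≠ c y := fun h => hxy (by rw [← hgc x hx, ← hgc y hy, h])
  have hcomb : a * c x + b * c y ∈ Set.Ici (0:ℝ) :=
    add_nonneg (mul_nonneg ha.le hu) (mul_nonneg hb.le hv)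
  have hlt : g (c (a*x+b*y)) < g (a * c x + b * c y) := by
    calc g (c (a*x+b*y)) = a*x+b*y := hgc _ hw
      _ = a * g (c x) + b * g (c y) := by rw [hgc x hx, hgc y hy]
      _ < g (a * c x + b * c y) := hconc _ hu _ hv huv a b ha hb hab
  exact (hmono.lt_iff_lt (hcpos _ hw) hcomb).mp hlt

/-- Inverse of a strictly increasing, strictly convex function is strictly concave. -/
lemma inverse_strict_concave (g c : ℝ → ℝ)
    (hmono : StrictMonoOn g (Set.Ici 0))
    (hconv : ∀ u ∈ Set.Ici (0:ℝ), ∀ v ∈ Set.Ici (0:ℝ), u ≠ v → ∀ a b : ℝ,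
      0 < a → 0 < b → a + b = 1 → g (a*u + b*v) < a * g u + b * g v)
    (hcpos : ∀ x ∈ Set.Ici (0:ℝ), c x ∈ Set.Ici (0:ℝ))
    (hgc : ∀ x ∈ Set.Ici (0:ℝ), g (c x) = x) :
    StrictConcaveOn ℝ (Set.Ici 0) c := by
  refine ⟨convex_Ici 0, ?_⟩
  intro x hx y hy hxy a b ha hb hab
  simp only [smul_eq_mul]
  have hx' : (0:ℝ) ≤ x := hx
  have hy' : (0:ℝ) ≤ y := hy
  have hw : a*x + b*y ∈ Set.Ici (0:ℝ) :=
    add_nonneg (mul_nonneg ha.le hx') (mul_nonneg hb.le hy')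
  have hu := hcpos x hx
  have hv := hcpos y hy
  have huv : c x ≠ c y := fun h => hxy (by rw [← hgc x hx, ← hgc y hy, h])
  have hcomb : a * c x + b * c y ∈ Set.Ici (0:ℝ) :=
    add_nonneg (mul_nonneg ha.le hu) (mul_nonneg hb.le hv)
  have hlt : g (a * c x + b * c y) < g (c (a*x+b*y)) := by
    calc g (a * c x + b * c y) < a * g (c x) + b * g (c y) :=
        hconv _ hu _ hv huv a b ha hb hab
      _ = a*x+b*y := by rw [hgc x hx, hgc y hy]
      _ = g (c (a*x+b*y)) := (hgc _ hw).symm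
  exact (hmono.lt_iff_lt hcomb (hcpos _ hw)).mp hlt

set_option maxHeartbeats 1000000 in
/-- Convexity/concavity of the optimal feedback consumption in wealth:
strictly convex if `p > p₁`, strictly concave if `p < p₁`, affine if `p = p₁`,
where `p₁ = -κ/(1-κ)`. -/
theorem stmt_12 (α β ρ μZ η p κ : ℝ) (hα : 0 < α) (hβ : 0 < β)
    (hρ : μZ < ρ) (hμη : η < μZ) (hp : p < 1) (hp0 : p ≠ 0)
    (hρp : α * p < ρ * (1 - p))
    (hκ : κ ∈ Set.Ioo (0 : ℝ) 1)
    (hκroot : α * κ ^ 2 + (ρ - η - α) * κ + (μZ - ρ) = 0)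
    (p₁ : ℝ) (hp₁ : p₁ = -κ / (1 - κ))
    (f : ℝ → ℝ → ℝ)
    (hf : ∀ x z : ℝ, 0 ≤ x → 0 ≤ z → f x z ∈ Set.Ioc (0 : ℝ) β ∧
      x = (1 - p) ^ 2 / (ρ * (1 - p) - α * p) *
            ((f x z) ^ (-(1 / (1 - p))) - β ^ (-(1 / (1 - p))))
          + z * (β ^ (-(κ - 1)) * (f x z) ^ (κ - 1) - 1))
    (z : ℝ) (hz : 0 < z) :
    (p₁ < p → StrictConvexOn ℝ (Set.Ici 0) (fun x : ℝ => (f x z) ^ (1 / (p - 1)))) ∧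
    (p < p₁ → StrictConcaveOn ℝ (Set.Ici 0) (fun x : ℝ => (f x z) ^ (1 / (p - 1)))) ∧
    (p = p₁ → ∃ a b : ℝ, ∀ x ∈ Set.Ici (0 : ℝ), (f x z) ^ (1 / (p - 1)) = a * x + b) := by
  obtain ⟨hκ0, hκ1⟩ := hκ
  have h1p : (0:ℝ) < 1 - p := by linarith
  have hp1ne : p - 1 ≠ 0 := by intro h; linarith [h]
  obtain ⟨q, hqdef⟩ : ∃ q : ℝ, q = (1-p)*(1-κ) := ⟨_, rfl⟩
  obtain ⟨A, hAdef⟩ : ∃ A : ℝ, A = (1-p)^2 / (ρ*(1-p) - α*p) := ⟨_, rfl⟩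
  obtain ⟨b0, hb0def⟩ : ∃ b0 : ℝ, b0 = β ^ (1/(p-1)) := ⟨_, rfl⟩
  obtain ⟨K, hKdef⟩ : ∃ K : ℝ, K = z * b0 ^ (-q) := ⟨_, rfl⟩
  obtain ⟨C, hCdef⟩ : ∃ C : ℝ, C = A * b0 + z := ⟨_, rfl⟩
  have hden : (0:ℝ) < ρ*(1-p) - α*p := by linarith
  have hA : 0 < A := hAdef ▸ div_pos (by positivity) hden
  have hq : 0 < q := hqdef ▸ mul_pos h1p (by linarith)
  have hb0 : 0 < b0 := hb0def ▸ Real.rpow_pos_of_pos hβ _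
  have hK : 0 < K := hKdef ▸ mul_pos hz (Real.rpow_pos_of_pos hb0 _)
  have he : -(1/(1-p)) = 1/(p-1) := by
    rw [show p - 1 = -(1-p) by ring, div_neg]
  have heq : (1/(p-1)) * q = κ - 1 := by
    rw [hqdef]; field_simp; ring
  -- the key implicit equation in terms of c x = f x z ^ (1/(p-1))
  have key : ∀ x : ℝ, 0 ≤ x →
      0 < f x z ^ (1/(p-1)) ∧
      x = A * (f x z ^ (1/(p-1))) + K * (f x z ^ (1/(p-1))) ^ q - C := by
    intro x hx
    obtain ⟨⟨hfpos, hfle⟩, hxeq⟩ := hf x z hx hz.le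
    have hc : 0 < f x z ^ (1/(p-1)) := Real.rpow_pos_of_pos hfpos _
    refine ⟨hc, ?_⟩
    have h1 : f x z ^ (-(1/(1-p))) = f x z ^ (1/(p-1)) := by rw [he]
    have h2 : β ^ (-(1/(1-p))) = b0 := by rw [he, hb0def]
    have h3 : f x z ^ (κ - 1) = (f x z ^ (1/(p-1))) ^ q := by
      rw [← Real.rpow_mul hfpos.le, heq]
    have h4 : β ^ (-(κ - 1)) = b0 ^ (-q) := by
      rw [hb0def, ← Real.rpow_mul hβ.le]
      congr 1
      rw [show (1/(p-1)) * -q = -((1/(p-1))*q) by ring, heq]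
    rw [h1, h2, h3, h4, ← hAdef] at hxeq
    rw [hKdef, hCdef]
    linear_combination hxeq
  have hgc : ∀ x ∈ Set.Ici (0:ℝ),
      (fun t : ℝ => A * t + K * t ^ q - C) (f x z ^ (1/(p-1))) = x := by
    intro x hx
    exact ((key x hx).2).symm
  have hcpos : ∀ x ∈ Set.Ici (0:ℝ), f x z ^ (1/(p-1)) ∈ Set.Ici (0:ℝ) := by
    intro x hx
    exact (key x hx).1.le
  have hmono : StrictMonoOn (fun t : ℝ => A * t + K * t ^ q - C) (Set.Ici 0) := by
    intro s hs t ht hst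
    have h1 : s ^ q < t ^ q := Real.rpow_lt_rpow hs hst hq
    have h2 : K * s ^ q < K * t ^ q := mul_lt_mul_of_pos_left h1 hK
    have h3 : A * s < A * t := mul_lt_mul_of_pos_left hst hA
    show A * s + K * s ^ q - C < A * t + K * t ^ q - C
    linarith
  have hκne : (1:ℝ) - κ ≠ 0 := by linarith
  refine ⟨?_, ?_, ?_⟩
  · -- strictly convex case
    intro hpp
    have hq1 : q < 1 := by
      have h1 : -κ < p * (1-κ) := by
        have := (div_lt_iff₀ (by linarith : (0:ℝ) < 1-κ)).mp (hp₁ ▸ hpp)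
        linarith [this]
      rw [hqdef]; nlinarith
    refine inverse_strict_convex (fun t : ℝ => A * t + K * t ^ q - C) _ hmono ?_ hcpos hgc
    intro u hu v hv huv a b ha hb hab
    have h1 := (Real.strictConcaveOn_rpow hq hq1).2 hu hv huv ha hb hab
    simp only [smul_eq_mul] at h1
    have h2 : K * (a * u ^ q + b * v ^ q) < K * (a*u + b*v) ^ q :=
      mul_lt_mul_of_pos_left h1 hK
    have hb' : b = 1 - a := by linarith
    subst hb'
    show a * (A * u + K * u ^ q - C) + (1-a) * (A * v + K * v ^ q - C) <
      A * (a*u + (1-a)*v) + K * (a*u + (1-a)*v) ^ q - C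
    linarith [h2]
  · -- strictly concave case
    intro hpp
    have hq1 : 1 < q := by
      have h1 : p * (1-κ) < -κ := by
        have := (lt_div_iff₀ (by linarith : (0:ℝ) < 1-κ)).mp (hp₁ ▸ hpp)
        linarith [this]
      rw [hqdef]; nlinarith
    refine inverse_strict_concave (fun t : ℝ => A * t + K * t ^ q - C) _ hmono ?_ hcpos hgc
    intro u hu v hv huv a b ha hb hab
    have h1 := (strictConvexOn_rpow hq1).2 hu hv huv ha hb hab
    simp only [smul_eq_mul] at h1
    have h2 : K * (a*u + b*v) ^ q < K * (a * u ^ q + b * v ^ q) :=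
      mul_lt_mul_of_pos_left h1 hK
    have hb' : b = 1 - a := by linarith
    subst hb'
    show A * (a*u + (1-a)*v) + K * (a*u + (1-a)*v) ^ q - C <
      a * (A * u + K * u ^ q - C) + (1-a) * (A * v + K * v ^ q - C)
    linarith [h2]
  · -- affine case
    intro hpp
    have hq1 : q = 1 := by
      rw [hqdef, hpp, hp₁]
      field_simp
      ring
    have hAK : 0 < A + K := by linarith
    refine ⟨1/(A+K), C/(A+K), ?_⟩
    intro x hx
    have h := (key x hx).2
    rw [hq1, Real.rpow_one] at h
    field_simp
    linarith [h]
end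

section
/- Let d=1, μ>0, σ>0, σ_Z≥0, set α=μ²/(2σ²), η=σ_Zμ/σ (correlation γ=1). Fix β>0, ρ, μ_Z ∈ ℝ with ρ>μ_Z and μ_Z>η, p<1 with p≠0 and ρ(1−p)>αp, and let κ∈(0,1) be the positive root of ακ²+(ρ−η−α)κ+(μ_Z−ρ)=0. Then for every fixed z>0, the map x ↦ θ*(x,z) is strictly increasing on [0,∞). -/
open Real

/-- The optimal feedback portfolio `x ↦ θ*(x,z)` is strictly increasing on `[0,∞)`
in the one-dimensional market with correlation `γ = 1`. -/
theorem stmt_13 (μ σ σZ β ρ μZ p κ α η : ℝ)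
    (hμ : 0 < μ) (hσ : 0 < σ) (hσZ : 0 ≤ σZ)
    (hαdef : α = μ ^ 2 / (2 * σ ^ 2)) (hηdef : η = σZ * μ / σ)
    (hβ : 0 < β) (hρ : μZ < ρ) (hμη : η < μZ) (hp : p < 1) (hp0 : p ≠ 0)
    (hρp : α * p < ρ * (1 - p))
    (hκ : κ ∈ Set.Ioo (0 : ℝ) 1)
    (hκroot : α * κ ^ 2 + (ρ - η - α) * κ + (μZ - ρ) = 0)
    (f : ℝ → ℝ → ℝ)
    (hf : ∀ x z : ℝ, 0 ≤ x → 0 ≤ z → f x z ∈ Set.Ioc (0 : ℝ) β ∧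
      x = (1 - p) ^ 2 / (ρ * (1 - p) - α * p) *
            ((f x z) ^ (-(1 / (1 - p))) - β ^ (-(1 / (1 - p))))
          + z * (β ^ (-(κ - 1)) * (f x z) ^ (κ - 1) - 1))
    (z : ℝ) (hz : 0 < z) :
    StrictMonoOn
      (fun x : ℝ =>
        μ / σ ^ 2 * ((1 - p) / (ρ * (1 - p) - α * p) * (f x z) ^ (-(1 / (1 - p)))
            + (1 - κ) * β ^ (-(κ - 1)) * z * (f x z) ^ (κ - 1))
          + σZ / σ * z * β ^ (-(κ - 1)) * (f x z) ^ (κ - 1))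
      (Set.Ici 0) := by
  have h1p : (0:ℝ) < 1 - p := by linarith
  have hD : (0:ℝ) < ρ * (1 - p) - α * p := by linarith
  have he1 : -(1 / (1 - p)) < 0 := by
    have : (0:ℝ) < 1 / (1 - p) := by positivity
    linarith
  have he2 : κ - 1 < 0 := by linarith [hκ.2]
  have hB : (0:ℝ) < β ^ (-(κ - 1)) := Real.rpow_pos_of_pos hβ _
  -- f is strictly antitone in x on [0,∞)
  have hanti : ∀ a b : ℝ, 0 ≤ a → 0 ≤ b → a < b → f b z < f a z := by
    intro a b ha hb hab
    obtain ⟨⟨hfa0, _⟩, hga⟩ := hf a z ha hz.le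
    obtain ⟨⟨hfb0, _⟩, hgb⟩ := hf b z hb hz.le
    by_contra hle
    push_neg at hle
    -- then g(f a z) ≥ g(f b z), i.e. a ≥ b
    rcases eq_or_lt_of_le hle with heq | hlt
    · rw [heq] at hga
      rw [← hgb] at hga
      exact absurd hga (ne_of_lt hab)
    · have h1 : f b z ^ (-(1 / (1 - p))) < f a z ^ (-(1 / (1 - p))) :=
        Real.rpow_lt_rpow_of_neg hfa0 hlt he1
      have h2 : f b z ^ (κ - 1) < f a z ^ (κ - 1) :=
        Real.rpow_lt_rpow_of_neg hfa0 hlt he2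
      have hC : (0:ℝ) < (1 - p) ^ 2 / (ρ * (1 - p) - α * p) := by positivity
      have k1 : (1 - p) ^ 2 / (ρ * (1 - p) - α * p) *
            ((f b z) ^ (-(1 / (1 - p))) - β ^ (-(1 / (1 - p))))
          < (1 - p) ^ 2 / (ρ * (1 - p) - α * p) *
            ((f a z) ^ (-(1 / (1 - p))) - β ^ (-(1 / (1 - p)))) := by
        apply mul_lt_mul_of_pos_left _ hC
        linarith
      have k2 : z * (β ^ (-(κ - 1)) * (f b z) ^ (κ - 1) - 1)
          < z * (β ^ (-(κ - 1)) * (f a z) ^ (κ - 1) - 1) := by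
        apply mul_lt_mul_of_pos_left _ hz
        have := mul_lt_mul_of_pos_left h2 hB
        linarith
      rw [hga, hgb] at hab
      linarith
  intro a ha b hb hab
  simp only [Set.mem_Ici] at ha hb
  obtain ⟨⟨hfa0, _⟩, _⟩ := hf a z ha hz.le
  obtain ⟨⟨hfb0, _⟩, _⟩ := hf b z hb hz.le
  have hfab : f b z < f a z := hanti a b ha hb hab
  have h1 : f a z ^ (-(1 / (1 - p))) < f b z ^ (-(1 / (1 - p))) :=
    Real.rpow_lt_rpow_of_neg hfb0 hfab he1
  have h2 : f a z ^ (κ - 1) < f b z ^ (κ - 1) :=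
    Real.rpow_lt_rpow_of_neg hfb0 hfab he2
  simp only
  have hA : (0:ℝ) < (1 - p) / (ρ * (1 - p) - α * p) := by positivity
  have hμσ : (0:ℝ) < μ / σ ^ 2 := by positivity
  have h1κ : (0:ℝ) < 1 - κ := by linarith [hκ.2]
  have hσZσ : (0:ℝ) ≤ σZ / σ * z * β ^ (-(κ - 1)) := by positivity
  have t0 : (1 - p) / (ρ * (1 - p) - α * p) * (f a z) ^ (-(1 / (1 - p)))
        + (1 - κ) * β ^ (-(κ - 1)) * z * (f a z) ^ (κ - 1)
      < (1 - p) / (ρ * (1 - p) - α * p) * (f b z) ^ (-(1 / (1 - p)))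
        + (1 - κ) * β ^ (-(κ - 1)) * z * (f b z) ^ (κ - 1) := by
    have t1 := mul_lt_mul_of_pos_left h1 hA
    have t2 : (1 - κ) * β ^ (-(κ - 1)) * z * f a z ^ (κ - 1)
        < (1 - κ) * β ^ (-(κ - 1)) * z * f b z ^ (κ - 1) := by
      apply mul_lt_mul_of_pos_left h2
      positivity
    linarith
  have t0' := mul_lt_mul_of_pos_left t0 hμσ
  have t3 : σZ / σ * z * β ^ (-(κ - 1)) * f a z ^ (κ - 1)
      ≤ σZ / σ * z * β ^ (-(κ - 1)) * f b z ^ (κ - 1) :=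
    mul_le_mul_of_nonneg_left h2.le hσZσ
  linarith
end

section
/- Let d=1, μ>0, σ>0, σ_Z≥0, set α=μ²/(2σ²), η=σ_Zμ/σ (correlation γ=1). Fix β>0, ρ, μ_Z ∈ ℝ with ρ>μ_Z and μ_Z>η, p<1 with p≠0 and ρ(1−p)>αp, and let κ∈(0,1) be the positive root of ακ²+(ρ−η−α)κ+(μ_Z−ρ)=0. Set p₁=−κ/(1−κ) and p₂=(σσ_Z−μκ)/(μ(1−κ)+σσ_Z). Then for every fixed z>0: if p∈(−∞,p₁)∪(p₂,1), the map x ↦ θ*(x,z) is strictly convex on [0,∞); if p∈(p₁,p₂), it is strictly concave; and if p=p₁ or p=p₂, it is affine in x. -/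
open Real
open Set Filter Topology

lemma aux_convex (C1 Zc A B q r β c0 : ℝ) (hC1 : 0 < C1) (hZc : 0 < Zc)
    (hβ : 0 < β) (hq : q < 0) (hr : r < 0)
    (F : ℝ → ℝ) (hF1 : ∀ x, 0 ≤ x → F x ∈ Set.Ioc (0:ℝ) β)
    (hF2 : ∀ x, 0 ≤ x → x = C1 * F x ^ q + Zc * F x ^ r + c0)
    (hGβ : C1 * β ^ q + Zc * β ^ r + c0 = 0)
    (hsign : q * r * (q - r) * (A * Zc - B * C1) < 0) :
    StrictConvexOn ℝ (Set.Ici 0) (fun x => A * F x ^ q + B * F x ^ r) := by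
  set G : ℝ → ℝ := fun y => C1 * y ^ q + Zc * y ^ r + c0 with hGdef
  have hGanti : StrictAntiOn G (Set.Ioi 0) := by
    intro y1 h1 y2 h2 h12
    have e1 : y2 ^ q < y1 ^ q := Real.rpow_lt_rpow_of_neg h1 h12 hq
    have e2 : y2 ^ r < y1 ^ r := Real.rpow_lt_rpow_of_neg h1 h12 hr
    have := mul_lt_mul_of_pos_left e1 hC1
    have := mul_lt_mul_of_pos_left e2 hZc
    simp only [hGdef]
    linarith
  have hGF : ∀ x, 0 ≤ x → G (F x) = x := fun x hx => (hF2 x hx).symm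
  have hGβ0 : G β = 0 := hGβ
  have hFpos : ∀ x, 0 ≤ x → 0 < F x := fun x hx => (hF1 x hx).1
  have hFleβ : ∀ x, 0 ≤ x → F x ≤ β := fun x hx => (hF1 x hx).2
  have hGy : ∀ y ∈ Set.Ioc (0:ℝ) β, 0 ≤ G y ∧ F (G y) = y := by
    intro y hy
    have h0 : 0 ≤ G y := by
      rcases eq_or_lt_of_le hy.2 with h | h
      · rw [h, hGβ0]
      · have := hGanti hy.1 (Set.mem_Ioi.2 hβ) h
        rw [hGβ0] at this; exact this.le
    refine ⟨h0, ?_⟩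
    have h1 : G (F (G y)) = G y := hGF _ h0
    exact hGanti.injOn (Set.mem_Ioi.2 (hFpos _ h0)) (Set.mem_Ioi.2 hy.1) h1
  have hFanti : StrictAntiOn F (Set.Ici 0) := by
    intro x1 h1 x2 h2 h12
    rcases lt_trichotomy (F x2) (F x1) with h | h | h
    · exact h
    · exfalso
      have e1 := hGF x1 h1
      have e2 := hGF x2 h2
      rw [h] at e2
      rw [e1] at e2
      linarith
    · exfalso
      have := hGanti (Set.mem_Ioi.2 (hFpos x1 h1)) (Set.mem_Ioi.2 (hFpos x2 h2)) h
      rw [hGF x1 h1, hGF x2 h2] at this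
      linarith
  have hF0 : F 0 = β := by
    have h1 : G (F 0) = G β := by rw [hGF 0 le_rfl, hGβ0]
    exact hGanti.injOn (Set.mem_Ioi.2 (hFpos 0 le_rfl)) (Set.mem_Ioi.2 hβ) h1
  have hcontAt : ∀ a : ℝ, 0 < a → ContinuousAt F a := by
    intro a ha
    have hmono : StrictMonoOn (fun x => -(F x)) (Set.Ici 0) := by
      intro x1 h1 x2 h2 h12
      simpa using hFanti h1 h2 h12
    have hnhds : Set.Ici (0:ℝ) ∈ 𝓝 a := Ici_mem_nhds ha
    have hFa : F a < β := by rw [← hF0]; exact hFanti Set.self_mem_Ici (le_of_lt ha) ha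
    have himg : (fun x => -(F x)) '' (Set.Ici 0) ∈ 𝓝 (-(F a)) := by
      apply Filter.mem_of_superset (isOpen_Ioo.mem_nhds
        (show -(F a) ∈ Set.Ioo (-β) (0:ℝ) from ⟨by linarith, by have := hFpos a ha.le; linarith⟩))
      intro w hw
      have hyw : -w ∈ Set.Ioc (0:ℝ) β := ⟨by simpa using hw.2, by have := hw.1; linarith⟩
      obtain ⟨h0, hFy⟩ := hGy (-w) hyw
      exact ⟨G (-w), h0, by show -(F (G (-w))) = w; rw [hFy]; ring⟩
    have := hmono.continuousAt_of_image_mem_nhds hnhds himg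
    have h2 : ContinuousAt (fun x => -(-(F x))) a := this.neg
    simpa using h2
  have hcontF : ContinuousOn F (Set.Ici 0) := by
    intro a ha
    rcases eq_or_lt_of_le (Set.mem_Ici.1 ha) with h | h
    · -- a = 0
      subst h
      have hmono : StrictMonoOn (fun x => -(F x)) (Set.Ici 0) := by
        intro x1 h1 x2 h2 h12
        simpa using hFanti h1 h2 h12
      have hcw : ContinuousWithinAt (fun x => -(F x)) (Set.Ici 0) 0 := by
        apply hmono.continuousWithinAt_right_of_exists_between self_mem_nhdsWithin
        intro b hb
        have hb' : -β < b := by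
          simp only [hF0] at hb; linarith [hb]
        set y : ℝ := (max (-b) 0 + β) / 2 with hy
        have hmaxlt : max (-b) 0 < β := by
          apply max_lt (by linarith) hβ
        have hy1 : 0 < y := by
          have := le_max_right (-b) 0; simp only [hy]; linarith
        have hy2 : y < β := by simp only [hy]; linarith
        have hyb : -b ≤ y := by
          have := le_max_left (-b) 0; simp only [hy]; linarith
        obtain ⟨h0, hFy⟩ := hGy y ⟨hy1, hy2.le⟩
        refine ⟨G y, h0, ?_, ?_⟩
        · simp only [hFy, hF0]; linarith
        · simp only [hFy]; linarith
      have h2 : ContinuousWithinAt (fun x => -(-(F x))) (Set.Ici 0) 0 := hcw.neg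
      simpa using h2
    · exact (hcontAt a h).continuousWithinAt
  have hG'neg : ∀ y : ℝ, 0 < y → C1 * q * y ^ (q-1) + Zc * r * y ^ (r-1) < 0 := by
    intro y hy
    have h1 : 0 < y ^ (q-1) := Real.rpow_pos_of_pos hy _
    have h2 : 0 < y ^ (r-1) := Real.rpow_pos_of_pos hy _
    nlinarith [mul_pos hC1 h1, mul_pos hZc h2]
  have hGderiv : ∀ y : ℝ, 0 < y →
      HasDerivAt G (C1 * q * y ^ (q-1) + Zc * r * y ^ (r-1)) y := by
    intro y hy
    have h1 : HasDerivAt (fun u : ℝ => u ^ q) (q * y ^ (q-1)) y :=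
      Real.hasDerivAt_rpow_const (Or.inl hy.ne')
    have h2 : HasDerivAt (fun u : ℝ => u ^ r) (r * y ^ (r-1)) y :=
      Real.hasDerivAt_rpow_const (Or.inl hy.ne')
    have h3 := ((h1.const_mul C1).add (h2.const_mul Zc)).add_const c0
    rw [hGdef]
    refine h3.congr_deriv ?_
    ring
  set Φ : ℝ → ℝ := fun y => (A * q * y ^ (q-1) + B * r * y ^ (r-1)) *
      (C1 * q * y ^ (q-1) + Zc * r * y ^ (r-1))⁻¹ with hΦdef
  have hθderiv : ∀ a : ℝ, 0 < a →
      HasDerivAt (fun x => A * F x ^ q + B * F x ^ r) (Φ (F a)) a := by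
    intro a ha
    have hFa := hFpos a ha.le
    have hG' := hGderiv (F a) hFa
    have hG'ne : (C1 * q * F a ^ (q-1) + Zc * r * F a ^ (r-1)) ≠ 0 := (hG'neg _ hFa).ne
    have hev : ∀ᶠ x in 𝓝 a, G (F x) = x :=
      Filter.eventually_of_mem (Ici_mem_nhds ha) (fun x hx => hGF x hx)
    have hFd : HasDerivAt F (C1 * q * F a ^ (q-1) + Zc * r * F a ^ (r-1))⁻¹ a :=
      hG'.of_local_left_inverse (hcontAt a ha) hG'ne hev
    have h1 := (hFd.rpow_const (p := q) (Or.inl hFa.ne')).const_mul A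
    have h2 := (hFd.rpow_const (p := r) (Or.inl hFa.ne')).const_mul B
    have h3 := h1.add h2
    refine h3.congr_deriv ?_
    rw [hΦdef]
    ring
  have hΦanti : ∀ y1 y2 : ℝ, 0 < y1 → y1 < y2 → Φ y2 < Φ y1 := by
    intro y1 y2 hy1 h12
    have hy2 : 0 < y2 := hy1.trans h12
    have hd1 := hG'neg y1 hy1
    have hd2 := hG'neg y2 hy2
    have hqr : q - r ≠ 0 := by
      intro h
      rw [show q * r * (q - r) * (A * Zc - B * C1)
        = q * r * (A * Zc - B * C1) * (q - r) by ring, h, mul_zero] at hsign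
      exact absurd hsign (lt_irrefl 0)
    have e1 : y1 ^ (q-1) = y1 ^ (q-r) * y1 ^ (r-1) := by
      rw [← Real.rpow_add hy1]; congr 1; ring
    have e2 : y2 ^ (q-1) = y2 ^ (q-r) * y2 ^ (r-1) := by
      rw [← Real.rpow_add hy2]; congr 1; ring
    have hb1 : 0 < y1 ^ (r-1) := Real.rpow_pos_of_pos hy1 _
    have hb2 : 0 < y2 ^ (r-1) := Real.rpow_pos_of_pos hy2 _
    have key : Φ y1 - Φ y2 = (q * r * (A * Zc - B * C1) * (y1 ^ (q-r) - y2 ^ (q-r)))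
        * (y1 ^ (r-1) * y2 ^ (r-1))
        * ((C1 * q * y1 ^ (q-1) + Zc * r * y1 ^ (r-1))
        * (C1 * q * y2 ^ (q-1) + Zc * r * y2 ^ (r-1)))⁻¹ := by
      have hne1 : C1 * q * (y1 ^ (q-r) * y1 ^ (r-1)) + Zc * r * y1 ^ (r-1) ≠ 0 := by
        rw [← e1]; exact hd1.ne
      have hne2 : C1 * q * (y2 ^ (q-r) * y2 ^ (r-1)) + Zc * r * y2 ^ (r-1) ≠ 0 := by
        rw [← e2]; exact hd2.ne
      rw [hΦdef]
      simp only
      rw [e1, e2, mul_inv]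
      linear_combination (-(A * q * (y1 ^ (q-r) * y1 ^ (r-1)) + B * r * y1 ^ (r-1))
        * (C1 * q * (y1 ^ (q-r) * y1 ^ (r-1)) + Zc * r * y1 ^ (r-1))⁻¹) * mul_inv_cancel₀ hne2
        + ((A * q * (y2 ^ (q-r) * y2 ^ (r-1)) + B * r * y2 ^ (r-1))
        * (C1 * q * (y2 ^ (q-r) * y2 ^ (r-1)) + Zc * r * y2 ^ (r-1))⁻¹) * mul_inv_cancel₀ hne1
    have hS : 0 < q * r * (A * Zc - B * C1) * (y1 ^ (q-r) - y2 ^ (q-r)) := by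
      rcases lt_or_gt_of_ne hqr with h | h
      · have hx : y2 ^ (q-r) < y1 ^ (q-r) := Real.rpow_lt_rpow_of_neg hy1 h12 (by linarith)
        have hT : 0 < q * r * (A * Zc - B * C1) := by nlinarith
        exact mul_pos hT (by linarith)
      · have hx : y1 ^ (q-r) < y2 ^ (q-r) := Real.rpow_lt_rpow hy1.le h12 (by linarith)
        have hT : q * r * (A * Zc - B * C1) < 0 := by nlinarith
        exact mul_pos_of_neg_of_neg hT (by linarith)
    have hpos : 0 < Φ y1 - Φ y2 := by
      rw [key]
      exact mul_pos (mul_pos hS (mul_pos hb1 hb2))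
        (inv_pos.2 (mul_pos_of_neg_of_neg hd1 hd2))
    linarith
  have hmono : StrictMonoOn (deriv (fun x => A * F x ^ q + B * F x ^ r))
      (interior (Set.Ici (0:ℝ))) := by
    rw [interior_Ici]
    intro a ha b hb hab
    rw [(hθderiv a ha).deriv, (hθderiv b hb).deriv]
    exact hΦanti (F b) (F a) (hFpos b (le_of_lt hb))
      (hFanti (show (0:ℝ) ≤ a from le_of_lt ha) (show (0:ℝ) ≤ b from le_of_lt hb) hab)
  have hcontθ : ContinuousOn (fun x => A * F x ^ q + B * F x ^ r) (Set.Ici 0) := by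
    apply ContinuousOn.add
    · exact continuousOn_const.mul
        (hcontF.rpow_const (fun x hx => Or.inl (hFpos x hx).ne'))
    · exact continuousOn_const.mul
        (hcontF.rpow_const (fun x hx => Or.inl (hFpos x hx).ne'))
  exact StrictMonoOn.strictConvexOn_of_deriv (convex_Ici 0) hcontθ hmono

lemma aux_concave (C1 Zc A B q r β c0 : ℝ) (hC1 : 0 < C1) (hZc : 0 < Zc)
    (hβ : 0 < β) (hq : q < 0) (hr : r < 0)
    (F : ℝ → ℝ) (hF1 : ∀ x, 0 ≤ x → F x ∈ Set.Ioc (0:ℝ) β)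
    (hF2 : ∀ x, 0 ≤ x → x = C1 * F x ^ q + Zc * F x ^ r + c0)
    (hGβ : C1 * β ^ q + Zc * β ^ r + c0 = 0)
    (hsign : 0 < q * r * (q - r) * (A * Zc - B * C1)) :
    StrictConcaveOn ℝ (Set.Ici 0) (fun x => A * F x ^ q + B * F x ^ r) := by
  have h := aux_convex C1 Zc (-A) (-B) q r β c0 hC1 hZc hβ hq hr F hF1 hF2 hGβ
    (by nlinarith)
  have heq : (fun x => A * F x ^ q + B * F x ^ r)
      = -(fun x => -A * F x ^ q + -B * F x ^ r) := by
    funext x; simp; ring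
  rw [heq]
  exact h.neg

set_option maxHeartbeats 2000000 in
/-- Convexity/concavity of the optimal feedback portfolio in wealth:
strictly convex if `p ∈ (-∞,p₁) ∪ (p₂,1)`, strictly concave if `p ∈ (p₁,p₂)`,
affine if `p = p₁` or `p = p₂`. -/
theorem stmt_14 (μ σ σZ β ρ μZ p κ α η : ℝ)
    (hμ : 0 < μ) (hσ : 0 < σ) (hσZ : 0 ≤ σZ)
    (hαdef : α = μ ^ 2 / (2 * σ ^ 2)) (hηdef : η = σZ * μ / σ)
    (hβ : 0 < β) (hρ : μZ < ρ) (hμη : η < μZ) (hp : p < 1) (hp0 : p ≠ 0)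
    (hρp : α * p < ρ * (1 - p))
    (hκ : κ ∈ Set.Ioo (0 : ℝ) 1)
    (hκroot : α * κ ^ 2 + (ρ - η - α) * κ + (μZ - ρ) = 0)
    (p₁ p₂ : ℝ) (hp₁ : p₁ = -κ / (1 - κ))
    (hp₂ : p₂ = (σ * σZ - μ * κ) / (μ * (1 - κ) + σ * σZ))
    (f : ℝ → ℝ → ℝ)
    (hf : ∀ x z : ℝ, 0 ≤ x → 0 ≤ z → f x z ∈ Set.Ioc (0 : ℝ) β ∧
      x = (1 - p) ^ 2 / (ρ * (1 - p) - α * p) *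
            ((f x z) ^ (-(1 / (1 - p))) - β ^ (-(1 / (1 - p))))
          + z * (β ^ (-(κ - 1)) * (f x z) ^ (κ - 1) - 1))
    (z : ℝ) (hz : 0 < z) :
    ((p < p₁ ∨ p₂ < p) →
      StrictConvexOn ℝ (Set.Ici 0)
        (fun x : ℝ =>
          μ / σ ^ 2 * ((1 - p) / (ρ * (1 - p) - α * p) * (f x z) ^ (-(1 / (1 - p)))
              + (1 - κ) * β ^ (-(κ - 1)) * z * (f x z) ^ (κ - 1))
            + σZ / σ * z * β ^ (-(κ - 1)) * (f x z) ^ (κ - 1))) ∧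
    (p₁ < p → p < p₂ →
      StrictConcaveOn ℝ (Set.Ici 0)
        (fun x : ℝ =>
          μ / σ ^ 2 * ((1 - p) / (ρ * (1 - p) - α * p) * (f x z) ^ (-(1 / (1 - p)))
              + (1 - κ) * β ^ (-(κ - 1)) * z * (f x z) ^ (κ - 1))
            + σZ / σ * z * β ^ (-(κ - 1)) * (f x z) ^ (κ - 1))) ∧
    ((p = p₁ ∨ p = p₂) →
      ∃ a b : ℝ, ∀ x ∈ Set.Ici (0 : ℝ),
        μ / σ ^ 2 * ((1 - p) / (ρ * (1 - p) - α * p) * (f x z) ^ (-(1 / (1 - p)))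
            + (1 - κ) * β ^ (-(κ - 1)) * z * (f x z) ^ (κ - 1))
          + σZ / σ * z * β ^ (-(κ - 1)) * (f x z) ^ (κ - 1) = a * x + b) := by
  obtain ⟨hκ0, hκ1⟩ := hκ
  have h1p : 0 < 1 - p := by linarith
  have h1κ : 0 < 1 - κ := by linarith
  have hD : 0 < ρ * (1 - p) - α * p := by linarith
  have hM : 0 < μ * (1 - κ) + σ * σZ := by nlinarith
  set q : ℝ := -(1 / (1 - p)) with hqdef
  set r : ℝ := κ - 1 with hrdef
  have hq : q < 0 := by rw [hqdef, neg_lt_zero]; positivity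
  have hr : r < 0 := by rw [hrdef]; linarith
  set C1 : ℝ := (1 - p) ^ 2 / (ρ * (1 - p) - α * p) with hC1def
  set Zc : ℝ := z * β ^ (-r) with hZcdef
  set A : ℝ := μ / σ ^ 2 * ((1 - p) / (ρ * (1 - p) - α * p)) with hAdef
  set B : ℝ := (μ / σ ^ 2 * (1 - κ) + σZ / σ) * Zc with hBdef
  set c0 : ℝ := -(C1 * β ^ q) - z with hc0def
  have hC1 : 0 < C1 := by rw [hC1def]; positivity
  have hZc : 0 < Zc := by
    rw [hZcdef]
    exact mul_pos hz (Real.rpow_pos_of_pos hβ _)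
  have hF1 : ∀ x, 0 ≤ x → f x z ∈ Set.Ioc (0:ℝ) β := fun x hx => (hf x z hx hz.le).1
  have hβr : β ^ (-r) * β ^ r = 1 := by
    rw [← Real.rpow_add hβ]; simp
  have hF2 : ∀ x, 0 ≤ x → x = C1 * f x z ^ q + Zc * f x z ^ r + c0 := by
    intro x hx
    have h := (hf x z hx hz.le).2
    rw [hZcdef, hc0def]
    linear_combination h
  have hGβ : C1 * β ^ q + Zc * β ^ r + c0 = 0 := by
    rw [hZcdef, hc0def]
    linear_combination z * hβr
  have hfeq : ∀ (x:ℝ), μ / σ ^ 2 * ((1 - p) / (ρ * (1 - p) - α * p) * f x z ^ q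
        + (1 - κ) * β ^ (-r) * z * f x z ^ r) + σZ / σ * z * β ^ (-r) * f x z ^ r
      = A * f x z ^ q + B * f x z ^ r := by
    intro x
    rw [hAdef, hBdef, hZcdef]
    ring
  have hsign_eq : q * r * (q - r) * (A * Zc - B * C1)
      = ((1 - κ) * Zc / ((1 - p) * σ ^ 2 * (ρ * (1 - p) - α * p)))
        * (((1 - κ) * (1 - p) - 1) * (μ - (μ * (1 - κ) + σ * σZ) * (1 - p))) := by
    rw [hqdef, hrdef, hAdef, hBdef, hC1def]
    field_simp
    ring
  have hcoef : 0 < (1 - κ) * Zc / ((1 - p) * σ ^ 2 * (ρ * (1 - p) - α * p)) := by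
    apply div_pos (mul_pos h1κ hZc)
    apply mul_pos (mul_pos h1p (by positivity)) hD
  refine ⟨?_, ?_, ?_⟩
  · rintro (h | h)
    all_goals simp only [hfeq]
    · -- p < p₁ : N > 0, E < 0
      have hp' : p * (1 - κ) < -κ := by
        rw [hp₁] at h
        have := mul_lt_mul_of_pos_right h h1κ
        calc p * (1-κ) < -κ/(1-κ)*(1-κ) := this
        _ = -κ := by field_simp
      have hN : 0 < (1 - κ) * (1 - p) - 1 := by nlinarith
      have hE : μ - (μ * (1 - κ) + σ * σZ) * (1 - p) < 0 := by
        nlinarith [mul_pos hM hN, mul_nonneg hσ.le hσZ]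
      have hsign : q * r * (q - r) * (A * Zc - B * C1) < 0 := by
        rw [hsign_eq]
        exact mul_neg_of_pos_of_neg hcoef (mul_neg_of_pos_of_neg hN hE)
      exact aux_convex C1 Zc A B q r β c0 hC1 hZc hβ hq hr (fun x => f x z) hF1 hF2 hGβ hsign
    · -- p₂ < p : E > 0, N < 0
      have hE : 0 < μ - (μ * (1 - κ) + σ * σZ) * (1 - p) := by
        rw [hp₂] at h
        have := (div_lt_iff₀ hM).1 h
        nlinarith
      have hN : (1 - κ) * (1 - p) - 1 < 0 := by
        nlinarith [mul_pos hμ h1κ, mul_nonneg hσ.le hσZ, mul_lt_mul_of_pos_left hE h1κ]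
      have hsign : q * r * (q - r) * (A * Zc - B * C1) < 0 := by
        rw [hsign_eq]
        exact mul_neg_of_pos_of_neg hcoef (mul_neg_of_neg_of_pos hN hE)
      exact aux_convex C1 Zc A B q r β c0 hC1 hZc hβ hq hr (fun x => f x z) hF1 hF2 hGβ hsign
  · intro h1 h2
    simp only [hfeq]
    have hN : (1 - κ) * (1 - p) - 1 < 0 := by
      rw [hp₁] at h1
      have := mul_lt_mul_of_pos_right h1 h1κ
      have h' : -κ < p * (1 - κ) := by
        calc -κ = -κ/(1-κ)*(1-κ) := by field_simp
        _ < p * (1-κ) := this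
      nlinarith
    have hE : μ - (μ * (1 - κ) + σ * σZ) * (1 - p) < 0 := by
      rw [hp₂] at h2
      have := (lt_div_iff₀ hM).1 h2
      nlinarith
    have hsign : 0 < q * r * (q - r) * (A * Zc - B * C1) := by
      rw [hsign_eq]
      exact mul_pos hcoef (mul_pos_of_neg_of_neg hN hE)
    exact aux_concave C1 Zc A B q r β c0 hC1 hZc hβ hq hr (fun x => f x z) hF1 hF2 hGβ hsign
  · rintro (h | h)
    · -- p = p₁ : q = r
      have h1pκ : (1 - p) * (1 - κ) = 1 := by
        rw [h, hp₁]; field_simp; ring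
      have hqr : q = r := by
        rw [hqdef, hrdef]
        rw [show (1:ℝ) - p = 1/(1-κ) by rw [eq_div_iff h1κ.ne']; linarith [h1pκ]]
        rw [one_div_one_div]
        ring
      refine ⟨(A+B)/(C1+Zc), (A+B)*(C1*β^q + z)/(C1+Zc), ?_⟩
      intro x hx
      rw [hfeq x]
      have e := hF2 x hx
      rw [← hqr] at e ⊢
      rw [hc0def] at e
      have hCZ : (C1 + Zc) ≠ 0 := by positivity
      rw [div_mul_eq_mul_div, ← add_div, eq_div_iff hCZ]
      linear_combination (-(A+B)) * e
    · -- p = p₂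
      have hE0 : μ - (μ * (1 - κ) + σ * σZ) * (1 - p) = 0 := by
        rw [h, hp₂]
        field_simp
        ring
      have hAB : A * Zc - B * C1 = 0 := by
        have hid : A * Zc - B * C1 = (Zc * (1-p) / (σ ^ 2 * (ρ * (1 - p) - α * p)))
            * (μ - (μ * (1 - κ) + σ * σZ) * (1 - p)) := by
          rw [hAdef, hBdef, hC1def]
          field_simp
        rw [hid, hE0, mul_zero]
      refine ⟨B/Zc, B*(C1*β^q + z)/Zc, ?_⟩
      intro x hx
      rw [hfeq x]
      have e := hF2 x hx
      rw [hc0def] at e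
      rw [div_mul_eq_mul_div, ← add_div, eq_div_iff hZc.ne']
      linear_combination (-B) * e + (f x z ^ q) * hAB
end

section
/- Let α>0, σ_Z≥0 and ρ, μ_Z, η ∈ ℝ with ρ>μ_Z and μ_Z>η, and let κ∈(0,1) be the positive root of ακ²+(ρ−η−α)κ+(μ_Z−ρ)=0. Define ṽ(x,z) = z·((1−κ)/κ)·(1+x/z)^{κ/(κ−1)} for x≥0, z>0. Then ṽ_{xx}(x,z) > 0 everywhere, and ṽ satisfies the nonlinear HJB equation −α·ṽ_x²/ṽ_{xx} + (σ_Z²z²/2)·(ṽ_{zz} − ṽ_{xz}²/ṽ_{xx}) − ηz·ṽ_x·ṽ_{xz}/ṽ_{xx} + (η−μ_Z)z·ṽ_x + μ_Z z·ṽ_z = ρ·ṽ at every (x,z)∈[0,∞)×(0,∞). -/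
open Real

set_option maxHeartbeats 2000000

lemma aux1 (c q z : ℝ) {x : ℝ} (hu : 0 < 1 + x / z) :
    HasDerivAt (fun s : ℝ => c * (1 + s / z) ^ q) (c * q * (1 + x / z) ^ (q - 1) / z) x := by
  have h1 : HasDerivAt (fun s : ℝ => 1 + s / z) (1 / z) x := by
    simpa using ((hasDerivAt_id x).div_const z).const_add 1
  have h2 := (h1.rpow_const (p := q) (Or.inl hu.ne')).const_mul c
  refine h2.congr_deriv ?_; ring

lemma aux0 (q x : ℝ) {z : ℝ} (hz : z ≠ 0) (hu : 0 < 1 + x / z) :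
    HasDerivAt (fun t : ℝ => (1 + x / t) ^ q)
      (-(x / z ^ 2) * q * (1 + x / z) ^ (q - 1)) z := by
  have h1 : HasDerivAt (fun t : ℝ => 1 + x / t) (-(x / z ^ 2)) z := by
    simp only [div_eq_mul_inv]
    simpa [mul_comm, mul_assoc, div_eq_mul_inv] using ((hasDerivAt_inv hz).const_mul x).const_add 1
  exact h1.rpow_const (p := q) (Or.inl hu.ne')

lemma aux2 (c q x : ℝ) {z : ℝ} (hz : z ≠ 0) (hu : 0 < 1 + x / z) :
    HasDerivAt (fun t : ℝ => c * (1 + x / t) ^ q)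
      (-(c * q * x / z ^ 2 * (1 + x / z) ^ (q - 1))) z := by
  have h2 := (aux0 q x hz hu).const_mul c
  refine h2.congr_deriv ?_; ring

lemma aux3 (c q x : ℝ) {z : ℝ} (hz : z ≠ 0) (hu : 0 < 1 + x / z) :
    HasDerivAt (fun t : ℝ => c * (t * (1 + x / t) ^ q))
      (c * (1 + x / z) ^ q - c * q * (x / z) * (1 + x / z) ^ (q - 1)) z := by
  have h2 := ((hasDerivAt_id z).mul (aux0 q x hz hu)).const_mul c
  refine h2.congr_deriv ?_
  simp only [id]
  field_simp
  ring


/-- The explicit function `ṽ(x,z) = z((1-κ)/κ)(1+x/z)^{κ/(κ-1)}` has strictly positive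
second `x`-derivative and solves the nonlinear HJB equation of the pure
benchmark-tracking problem on `[0,∞) × (0,∞)`. -/
theorem stmt_16 (α σZ ρ μZ η κ : ℝ) (hα : 0 < α) (hσZ : 0 ≤ σZ)
    (hρ : μZ < ρ) (hμη : η < μZ) (hκ : κ ∈ Set.Ioo (0 : ℝ) 1)
    (hκroot : α * κ ^ 2 + (ρ - η - α) * κ + (μZ - ρ) = 0)
    (tv : ℝ → ℝ → ℝ)
    (htv : ∀ x z : ℝ, tv x z = z * ((1 - κ) / κ) * (1 + x / z) ^ (κ / (κ - 1))) :
    ∀ x z : ℝ, 0 ≤ x → 0 < z →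
      0 < deriv (deriv (fun s => tv s z)) x ∧
      -α * (deriv (fun s => tv s z) x) ^ 2 / deriv (deriv (fun s => tv s z)) x
        + σZ ^ 2 * z ^ 2 / 2 * (deriv (deriv (fun t => tv x t)) z
            - (deriv (fun t => deriv (fun s => tv s t) x) z) ^ 2
                / deriv (deriv (fun s => tv s z)) x)
        - η * z * deriv (fun s => tv s z) x
            * deriv (fun t => deriv (fun s => tv s t) x) z
            / deriv (deriv (fun s => tv s z)) x
        + (η - μZ) * z * deriv (fun s => tv s z) x
        + μZ * z * deriv (fun t => tv x t) z
        = ρ * tv x z := by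
  obtain ⟨hκ0, hκ1⟩ := hκ
  set c : ℝ := (1 - κ) / κ with hc_def
  set p : ℝ := κ / (κ - 1) with hp_def
  have hc : 0 < c := div_pos (by linarith) hκ0
  have hp : p < 0 := div_neg_of_pos_of_neg hκ0 (by linarith)
  intro x z hx hz
  -- pointwise x-derivative, valid for all z' > 0 and x' ≥ 0 (in fact 1 + x'/z' > 0)
  have dx : ∀ z' : ℝ, z' ≠ 0 → ∀ x' : ℝ, 0 < 1 + x' / z' →
      deriv (fun s => tv s z') x' = c * p * (1 + x' / z') ^ (p - 1) := by
    intro z' hz' x' hu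
    have h : (fun s => tv s z') = fun s => (z' * c) * (1 + s / z') ^ p := by
      funext s; rw [htv]
    rw [h]
    have h2 := (aux1 (z' * c) p z' hu).deriv
    rw [h2]; field_simp
  have hu : 0 < 1 + x / z := by
    have h1 : 0 ≤ x / z := div_nonneg hx hz.le
    linarith
  -- second x-derivative
  have hev : deriv (fun s => tv s z) =ᶠ[nhds x] fun s => c * p * (1 + s / z) ^ (p - 1) := by
    have hopen : IsOpen {s : ℝ | 0 < 1 + s / z} := by
      have : Continuous fun s : ℝ => 1 + s / z := by continuity
      exact isOpen_lt continuous_const this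
    filter_upwards [hopen.mem_nhds hu] with s hs using dx z hz.ne' s hs
  have dxx : deriv (deriv (fun s => tv s z)) x
      = c * p * (p - 1) * (1 + x / z) ^ (p - 2) / z := by
    rw [hev.deriv_eq]
    have h2 := (aux1 (c * p) (p - 1) z hu).deriv
    rw [h2]; ring_nf
  -- z-derivative
  have dz : deriv (fun t => tv x t) z
      = c * (1 + x / z) ^ p - c * p * (x / z) * (1 + x / z) ^ (p - 1) := by
    have h : (fun t => tv x t) = fun t => c * (t * (1 + x / t) ^ p) := by
      funext t; rw [htv]; ring
    rw [h, (aux3 c p x hz.ne' hu).deriv]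
  -- mixed derivative
  have hopenz : IsOpen {t : ℝ | 0 < t} := isOpen_lt continuous_const continuous_id
  have hmemz : {t : ℝ | 0 < t} ∈ nhds z := hopenz.mem_nhds hz
  have dxz : deriv (fun t => deriv (fun s => tv s t) x) z
      = -(c * p * (p - 1) * x / z ^ 2 * (1 + x / z) ^ (p - 2)) := by
    have hev2 : (fun t => deriv (fun s => tv s t) x) =ᶠ[nhds z]
        fun t => c * p * (1 + x / t) ^ (p - 1) := by
      filter_upwards [hmemz] with t ht
      exact dx t ht.ne' x (by have : 0 ≤ x / t := div_nonneg hx ht.le; linarith)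
    rw [hev2.deriv_eq, (aux2 (c * p) (p - 1) x hz.ne' hu).deriv]
    ring_nf
  -- second z-derivative
  have dzz : deriv (deriv (fun t => tv x t)) z
      = c * p * (p - 1) * x ^ 2 / z ^ 3 * (1 + x / z) ^ (p - 2) := by
    have hev3 : deriv (fun t => tv x t) =ᶠ[nhds z]
        fun t => c * (1 + x / t) ^ p - c * p * x * ((1 + x / t) ^ (p - 1) * t⁻¹) := by
      filter_upwards [hmemz] with t ht
      have hut : 0 < 1 + x / t := by have : 0 ≤ x / t := div_nonneg hx ht.le; linarith
      have h : (fun t' => tv x t') = fun t' => c * (t' * (1 + x / t') ^ p) := by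
        funext t'; rw [htv]; ring
      rw [h, (aux3 c p x ht.ne' hut).deriv]
      field_simp

    rw [hev3.deriv_eq]
    have h1 := aux2 c p x hz.ne' hu
    have h2 : HasDerivAt (fun t : ℝ => (1 + x / t) ^ (p - 1) * t⁻¹)
        ((-(x / z ^ 2) * (p - 1) * (1 + x / z) ^ (p - 1 - 1)) * z⁻¹
          + (1 + x / z) ^ (p - 1) * (-(z ^ 2)⁻¹)) z :=
      (aux0 (p - 1) x hz.ne' hu).mul (hasDerivAt_inv hz.ne')
    have h3 := h1.sub ((h2.const_mul (c * p * x)))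
    rw [HasDerivAt.deriv (f := fun t => c * (1 + x / t) ^ p - c * p * x * ((1 + x / t) ^ (p - 1) * t⁻¹)) h3]
    have e : p - 1 - 1 = p - 2 := by ring
    rw [e]
    field_simp
    ring
  set u : ℝ := 1 + x / z with hu_def
  have hw : 0 < u ^ (p - 2) := rpow_pos_of_pos hu _
  have hpp : 0 < p * (p - 1) := mul_pos_of_neg_of_neg hp (by linarith)
  have hDpos : 0 < c * p * (p - 1) * u ^ (p - 2) / z := by
    apply div_pos _ hz
    have h1 : 0 < c * (p * (p - 1)) := mul_pos hc hpp
    nlinarith [hw]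
  refine ⟨by rw [dxx]; exact hDpos, ?_⟩
  rw [dxx, dz, dxz, dzz, dx z hz.ne' x hu, htv]
  have e1 : u ^ (p - 1) = u ^ (p - 2) * u := by
    rw [← rpow_add_one hu.ne' (p - 2)]; ring_nf
  have e2 : u ^ p = u ^ (p - 1) * u := by
    rw [← rpow_add_one hu.ne' (p - 1)]; ring_nf
  rw [e2, e1]
  set w : ℝ := u ^ (p - 2) with hw_def
  have huz : u = (z + x) / z := by rw [hu_def]; field_simp
  rw [huz, hc_def, hp_def]
  have hκ1' : κ - 1 ≠ 0 := by intro h; exact absurd (by linarith : κ = 1) (by linarith)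
  have h1κ : (1 : ℝ) - κ ≠ 0 := by intro h; exact absurd (by linarith : κ = 1) (by linarith)
  field_simp [hz.ne', hκ0.ne', hκ1', hw.ne', h1κ]
  linear_combination (-(2:ℝ) * (κ - 1) * (z + x) ^ 2) * hκroot
end

section
/- Let α>0 and ρ, η ∈ ℝ be fixed, and for μ_Z < ρ define κ(μ_Z) = (−(ρ−η−α)+√((ρ−η−α)²+4α(ρ−μ_Z)))/(2α). Then μ_Z ↦ κ(μ_Z) is strictly decreasing on (−∞,ρ); consequently, for η < μ_Z < μ_Z' < ρ one has 0 < κ(μ_Z') < κ(μ_Z) < 1 and the critical risk-aversion level CRA(μ_Z) := 1/(1−κ(μ_Z)) satisfies CRA(μ_Z') < CRA(μ_Z). -/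
open Real

/-- The positive root `κ(μ_Z)` is strictly decreasing in the benchmark drift `μ_Z`;
consequently the critical risk-aversion level `CRA = 1/(1-κ)` is decreasing in `μ_Z`. -/
theorem stmt_18 (α ρ η : ℝ) (hα : 0 < α)
    (κ : ℝ → ℝ)
    (hκ : ∀ m : ℝ, m < ρ →
      κ m = (-(ρ - η - α) + Real.sqrt ((ρ - η - α) ^ 2 + 4 * α * (ρ - m))) / (2 * α)) :
    StrictAntiOn κ (Set.Iio ρ) ∧
    ∀ m m' : ℝ, η < m → m < m' → m' < ρ →
      0 < κ m' ∧ κ m' < κ m ∧ κ m < 1 ∧ 1 / (1 - κ m') < 1 / (1 - κ m) := by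
  set b := ρ - η - α with hb
  have h2α : (0:ℝ) < 2 * α := by linarith
  have anti : ∀ m m' : ℝ, m < m' → m' < ρ → κ m' < κ m := by
    intro m m' hmm' hm'ρ
    have hmρ : m < ρ := hmm'.trans hm'ρ
    rw [hκ m hmρ, hκ m' hm'ρ]
    rw [div_lt_div_iff_of_pos_right h2α]
    have harg : b ^ 2 + 4 * α * (ρ - m') < b ^ 2 + 4 * α * (ρ - m) := by nlinarith
    have hnn : (0:ℝ) ≤ b ^ 2 + 4 * α * (ρ - m') := by nlinarith [sq_nonneg b]
    have := Real.sqrt_lt_sqrt hnn harg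
    linarith
  constructor
  · intro m hm m' hm' hmm'
    exact anti m m' hmm' hm'
  · intro m m' hηm hmm' hm'ρ
    have hmρ : m < ρ := hmm'.trans hm'ρ
    have hpos : 0 < κ m' := by
      rw [hκ m' hm'ρ]
      apply div_pos _ h2α
      have : Real.sqrt (b ^ 2) < Real.sqrt (b ^ 2 + 4 * α * (ρ - m')) := by
        apply Real.sqrt_lt_sqrt (sq_nonneg b); nlinarith
      have hb' : b ≤ Real.sqrt (b ^ 2) := by
        rw [Real.sqrt_sq_eq_abs]; exact le_abs_self b
      linarith
    have hlt1 : κ m < 1 := by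
      rw [hκ m hmρ]
      rw [div_lt_one h2α]
      have hy : (0:ℝ) < 2 * α + b := by simp only [hb]; linarith
      have : Real.sqrt (b ^ 2 + 4 * α * (ρ - m)) < 2 * α + b := by
        rw [Real.sqrt_lt' hy]; nlinarith
      linarith
    have hanti := anti m m' hmm' hm'ρ
    refine ⟨hpos, hanti, hlt1, ?_⟩
    apply one_div_lt_one_div_of_lt <;> linarith
end

section
/- Fix α>0, β>0, ρ, μ_Z, η ∈ ℝ with ρ>μ_Z and μ_Z>η, p<1 with p≠0 and ρ(1−p)>αp, and let κ∈(0,1) be the positive root of ακ²+(ρ−η−α)κ+(μ_Z−ρ)=0. Then for all z>0 and y∈(0,β/2]: ĥv_y(y,z) < 0, −y·ĥv_{yy}(y,z)/ĥv_y(y,z) ≤ 1/((1−p)(1−2^{−1/(1−p)})) + (1−κ)/(1−2^{κ−1}), and (β^{−(κ−1)}y^{κ−1}−1)·z / (−ĥv_y(y,z)) ≤ 1, where ĥv_y(y,z) = (1−p)²/(ρ(1−p)−αp)·(β^{−1/(1−p)} − y^{−1/(1−p)}) + z·(1 − β^{−(κ−1)}y^{κ−1}), ĥv_{yy}(y,z)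 = (1−p)/(ρ(1−p)−αp)·y^{−1/(1−p)−1} + z(1−κ)β^{−(κ−1)}y^{κ−2}, and ĥv_{yz}(y,z) = 1 − β^{−(κ−1)}y^{κ−1}. -/
open Real

set_option maxHeartbeats 1000000 in
/-- Uniform bounds on the dual value function's derivatives for `y ∈ (0, β/2]`:
`ĥv_y < 0`, `-y·ĥv_yy/ĥv_y` is bounded, and `(β^{-(κ-1)}y^{κ-1}-1)·z/(-ĥv_y) ≤ 1`. -/
theorem stmt_19 (α β ρ μZ η p κ : ℝ) (hα : 0 < α) (hβ : 0 < β)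
    (hρ : μZ < ρ) (hμη : η < μZ) (hp : p < 1) (hp0 : p ≠ 0)
    (hρp : α * p < ρ * (1 - p))
    (hκ : κ ∈ Set.Ioo (0 : ℝ) 1)
    (hκroot : α * κ ^ 2 + (ρ - η - α) * κ + (μZ - ρ) = 0)
    (vy vyy vyz : ℝ → ℝ → ℝ)
    (hvy : ∀ y z : ℝ, vy y z =
      (1 - p) ^ 2 / (ρ * (1 - p) - α * p) * (β ^ (-(1 / (1 - p))) - y ^ (-(1 / (1 - p))))
        + z * (1 - β ^ (-(κ - 1)) * y ^ (κ - 1)))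
    (hvyy : ∀ y z : ℝ, vyy y z =
      (1 - p) / (ρ * (1 - p) - α * p) * y ^ (-(1 / (1 - p)) - 1)
        + z * (1 - κ) * β ^ (-(κ - 1)) * y ^ (κ - 2))
    (hvyz : ∀ y z : ℝ, vyz y z = 1 - β ^ (-(κ - 1)) * y ^ (κ - 1)) :
    ∀ z y : ℝ, 0 < z → 0 < y → y ≤ β / 2 →
      vy y z < 0 ∧
      -y * vyy y z / vy y z ≤
        1 / ((1 - p) * (1 - (2 : ℝ) ^ (-(1 / (1 - p)))))
          + (1 - κ) / (1 - (2 : ℝ) ^ (κ - 1)) ∧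
      (β ^ (-(κ - 1)) * y ^ (κ - 1) - 1) * z / (-vy y z) ≤ 1 := by
  intro z y hz hy hy2
  obtain ⟨hκ0, hκ1⟩ := hκ
  have h1p : (0:ℝ) < 1 - p := by linarith
  have hD : (0:ℝ) < ρ * (1 - p) - α * p := by linarith
  have hyβ : y < β := by linarith
  have h2y : 0 < 2 * y := by linarith
  have hqneg : -(1 / (1 - p)) < 0 := by
    have : (0:ℝ) < 1 / (1 - p) := by positivity
    linarith
  have hκneg : κ - 1 < 0 := by linarith
  have hvy' := hvy y z
  have hvyy' := hvyy y z
  obtain ⟨c, hc0, hcdef⟩ : ∃ c : ℝ, 0 < c ∧ c = (1 - p) / (ρ * (1 - p) - α * p) :=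
    ⟨_, by positivity, rfl⟩
  set a := y ^ (-(1 / (1 - p))) with ha
  set b := β ^ (-(1 / (1 - p))) with hb
  set t := (2:ℝ) ^ (-(1 / (1 - p))) with htdef
  set s := (2:ℝ) ^ (κ - 1) with hsdef
  have ha0 : 0 < a := rpow_pos_of_pos hy _
  have hb0 : 0 < b := rpow_pos_of_pos hβ _
  have ht0 : 0 < t := rpow_pos_of_pos two_pos _
  have hs0 : 0 < s := rpow_pos_of_pos two_pos _
  have ht1 : t < 1 := rpow_lt_one_of_one_lt_of_neg one_lt_two hqneg
  have hs1 : s < 1 := rpow_lt_one_of_one_lt_of_neg one_lt_two hκneg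
  have hba : b < a := rpow_lt_rpow_of_neg hy hyβ hqneg
  -- b ≤ t * a
  have hbta : b ≤ t * a := by
    have h := rpow_le_rpow_of_nonpos h2y (by linarith : 2 * y ≤ β) hqneg.le
    rw [mul_rpow (by norm_num) hy.le] at h
    exact h
  -- u facts
  have hβκ0 : 0 < β ^ (κ - 1) := rpow_pos_of_pos hβ _
  have hyκ0 : 0 < y ^ (κ - 1) := rpow_pos_of_pos hy _
  have hβκinv : β ^ (-(κ - 1)) = (β ^ (κ - 1))⁻¹ := rpow_neg hβ.le _
  have hu0 : 0 < β ^ (-(κ - 1)) * y ^ (κ - 1) := by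
    have : (0:ℝ) < β ^ (-(κ - 1)) := rpow_pos_of_pos hβ _
    exact mul_pos this hyκ0
  have hu1 : 1 < β ^ (-(κ - 1)) * y ^ (κ - 1) := by
    have h := rpow_lt_rpow_of_neg hy hyβ hκneg
    rw [hβκinv]
    rw [mul_comm, ← div_eq_mul_inv]
    exact (one_lt_div hβκ0).2 h
  have hsu : 1 ≤ s * (β ^ (-(κ - 1)) * y ^ (κ - 1)) := by
    have h := rpow_le_rpow_of_nonpos h2y (by linarith : 2 * y ≤ β) hκneg.le
    rw [mul_rpow (by norm_num) hy.le] at h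
    rw [hβκinv]
    rw [show s * ((β ^ (κ - 1))⁻¹ * y ^ (κ - 1)) = (s * y ^ (κ - 1)) / β ^ (κ - 1) by ring]
    exact (one_le_div hβκ0).2 h
  set u := β ^ (-(κ - 1)) * y ^ (κ - 1) with hudef
  -- rewrite vy
  have hvyE : vy y z = -((1 - p) * c * (a - b) + z * (u - 1)) := by
    rw [hvy', hcdef]; ring
  have hApos : 0 < (1 - p) * c * (a - b) :=
    mul_pos (mul_pos h1p hc0) (by linarith)
  have hBpos : 0 < z * (u - 1) := mul_pos hz (by linarith)
  have hvyneg : vy y z < 0 := by rw [hvyE]; linarith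
  refine ⟨hvyneg, ?_, ?_⟩
  · -- second bound
    have hyE : y * vyy y z = c * a + z * (1 - κ) * u := by
      rw [hvyy', hcdef, hudef, ha]
      rw [show -(1 / (1 - p)) - 1 = -(1 / (1 - p)) - (1:ℝ) from rfl]
      rw [Real.rpow_sub hy, Real.rpow_one]
      rw [show κ - 2 = (κ - 1) - (1:ℝ) by ring]
      rw [Real.rpow_sub hy, Real.rpow_one]
      field_simp
    rw [div_le_iff_of_neg hvyneg, hvyE]
    have hnegmul : -y * vyy y z = -(c * a + z * (1 - κ) * u) := by
      rw [neg_mul, hyE]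
    rw [hnegmul]
    have h1t : (0:ℝ) < 1 - t := by linarith
    have h1s : (0:ℝ) < 1 - s := by linarith
    have h1κ : (0:ℝ) < 1 - κ := by linarith
    rw [div_add_div _ _ (ne_of_gt (mul_pos h1p h1t)) (ne_of_gt h1s)]
    rw [div_mul_eq_mul_div, div_le_iff₀ (mul_pos (mul_pos h1p h1t) h1s)]
    have k1 : (1 - s) * ((1 - p) * c) * (a * (1 - t)) ≤ (1 - s) * ((1 - p) * c) * (a - b) := by
      apply mul_le_mul_of_nonneg_left _ (le_of_lt (mul_pos h1s (mul_pos h1p hc0)))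
      linarith [hbta]
    have k2 : ((1 - κ) * ((1 - p) * (1 - t))) * (z * (u * (1 - s))) ≤
        ((1 - κ) * ((1 - p) * (1 - t))) * (z * (u - 1)) := by
      apply mul_le_mul_of_nonneg_left _ (le_of_lt (mul_pos h1κ (mul_pos h1p h1t)))
      apply mul_le_mul_of_nonneg_left _ hz.le
      linarith [hsu]
    have k3 : 0 ≤ (1 - s) * (z * (u - 1)) := le_of_lt (mul_pos h1s hBpos)
    have k4 : 0 ≤ ((1 - κ) * ((1 - p) * (1 - t))) * ((1 - p) * c * (a - b)) :=
      le_of_lt (mul_pos (mul_pos h1κ (mul_pos h1p h1t)) hApos)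
    linarith [k1, k2, k3, k4]
  · rw [hvyE, neg_neg, div_le_one (by linarith)]
    nlinarith [hApos]
end
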